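/- arXiv:2102.07015 — 5 statements merged into one kernel-verified Lean document; each statement's English description precedes it below -/
import Mathlib

section
/- There exist universal constants C₁, C₂ ∈ (0,∞) such that for every α ∈ [0,1), every nonincreasing sequence (a_n)_{n≥1} of nonnegative reals with ∑_{n≥1} a_n² < ∞, and every real p ≥ 2, one has C₁ · R'_p ≤ R_p ≤ C₂ · R'_p, where R_p = ( (1−α) ∑_{n≥1} α^{n−1} ( p·a_n + √p · ( (1−α) ∑_{k>n} a_k² )^{1/2} )^p )^{1/p} and R'_p = p (1−α)^{1/p} ( ∑_{n≥1} α^{n−1} a_n^p )^{1/p} + √p · ( (1−α) ∑_{n≥1} a_n² )^{1/2}. -/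
/-!
With the probability weights `w n = (1 - α) * α ^ n`, `R_p` is the weighted `ℓ^p` norm of
`p • a + √p • b` with `b n = ((1 - α) * ∑_{k > n} a_k ^ 2) ^ (1/2)`, and the first summand of
`R'_p` is `p * ‖a‖_p`. Minkowski's inequality and `b n ≤ ((1 - α) * ∑ a_k ^ 2) ^ (1/2)` give
`R_p ≤ R'_p`. Conversely `R_p` dominates both `p * ‖a‖_p` and `√p * ‖b‖_p`, while the telescoping
identity `∑ w n * (b n ^ 2 + a n ^ 2) = (1 - α) * ∑ a n ^ 2` and `‖·‖_2 ≤ ‖·‖_p` for probability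
weights bound `((1 - α) * ∑ a n ^ 2) ^ (1/2)` by `‖b‖_p + ‖a‖_p`; hence `R'_p ≤ 3 * R_p`.
-/

open Real

noncomputable def weightedLpNorm {ι : Type*} (w : ι → ℝ) (p : ℝ) (x : ι → ℝ) : ℝ :=
  (∑' i, w i * x i ^ p) ^ (1 / p)

section WeightedLpNorm

variable {ι : Type*} {w x y : ι → ℝ} {p : ℝ}

lemma summable_mul_of_nonneg_of_le {f : ι → ℝ} {M : ℝ} (hw : ∀ i, 0 ≤ w i) (hws : Summable w)
    (hf : ∀ i, 0 ≤ f i) (hfM : ∀ i, f i ≤ M) : Summable fun i => w i * f i :=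
  (hws.mul_right M).of_nonneg_of_le (fun i => mul_nonneg (hw i) (hf i))
    fun i => mul_le_mul_of_nonneg_left (hfM i) (hw i)

lemma summable_mul_rpow_of_le (hp : 0 ≤ p) (hw : ∀ i, 0 ≤ w i) (hws : Summable w)
    (hx : ∀ i, 0 ≤ x i) {M : ℝ} (hxM : ∀ i, x i ≤ M) : Summable fun i => w i * x i ^ p :=
  summable_mul_of_nonneg_of_le hw hws (fun i => rpow_nonneg (hx i) p)
    fun i => rpow_le_rpow (hx i) (hxM i) hp

lemma weightedLpNorm_nonneg (hw : ∀ i, 0 ≤ w i) (hx : ∀ i, 0 ≤ x i) :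
    0 ≤ weightedLpNorm w p x :=
  rpow_nonneg (tsum_nonneg fun i => mul_nonneg (hw i) (rpow_nonneg (hx i) p)) _

lemma weightedLpNorm_mono (hp : 0 < p) (hw : ∀ i, 0 ≤ w i) (hx : ∀ i, 0 ≤ x i)
    (hxy : ∀ i, x i ≤ y i) (hys : Summable fun i => w i * y i ^ p) :
    weightedLpNorm w p x ≤ weightedLpNorm w p y := by
  have hle : ∀ i, w i * x i ^ p ≤ w i * y i ^ p := fun i =>
    mul_le_mul_of_nonneg_left (rpow_le_rpow (hx i) (hxy i) hp.le) (hw i)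
  have hnonneg : ∀ i, 0 ≤ w i * x i ^ p := fun i => mul_nonneg (hw i) (rpow_nonneg (hx i) p)
  exact rpow_le_rpow (tsum_nonneg hnonneg)
    ((hys.of_nonneg_of_le hnonneg hle).tsum_le_tsum hle hys) (by positivity)

lemma weightedLpNorm_const_mul (hp : 0 < p) (hw : ∀ i, 0 ≤ w i) (hx : ∀ i, 0 ≤ x i) {c : ℝ}
    (hc : 0 ≤ c) : weightedLpNorm w p (fun i => c * x i) = c * weightedLpNorm w p x := by
  have hsum : ∑' i, w i * (c * x i) ^ p = c ^ p * ∑' i, w i * x i ^ p := by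
    rw [← tsum_mul_left]
    exact tsum_congr fun i => by rw [mul_rpow hc (hx i)]; ring
  rw [weightedLpNorm, weightedLpNorm, hsum,
    mul_rpow (rpow_nonneg hc p) (tsum_nonneg fun i => mul_nonneg (hw i) (rpow_nonneg (hx i) p)),
    ← rpow_mul hc, mul_one_div_cancel hp.ne', rpow_one]

lemma weightedLpNorm_add_le (hp : 1 ≤ p) (hw : ∀ i, 0 ≤ w i) (hx : ∀ i, 0 ≤ x i)
    (hy : ∀ i, 0 ≤ y i) (hxs : Summable fun i => w i * x i ^ p)
    (hys : Summable fun i => w i * y i ^ p) :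
    weightedLpNorm w p (fun i => x i + y i) ≤ weightedLpNorm w p x + weightedLpNorm w p y := by
  -- Minkowski for the unweighted sequences `w ^ (1 / p) * x`, `w ^ (1 / p) * y`.
  have hscale : ∀ z : ι → ℝ, (∀ i, 0 ≤ z i) →
      (fun i => (w i ^ (1 / p) * z i) ^ p) = fun i => w i * z i ^ p :=
    fun z hz => funext fun i => by
      rw [mul_rpow (rpow_nonneg (hw i) _) (hz i), ← rpow_mul (hw i),
        one_div_mul_cancel (by positivity), rpow_one]
  have hmink := (Lp_add_le_tsum_of_nonneg hp (fun i => mul_nonneg (rpow_nonneg (hw i) _) (hx i))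
    (fun i => mul_nonneg (rpow_nonneg (hw i) _) (hy i)) (by rwa [hscale x hx])
    (by rwa [hscale y hy])).2
  simp only [← mul_add] at hmink
  rwa [hscale x hx, hscale y hy, hscale _ fun i => add_nonneg (hx i) (hy i)] at hmink

lemma weightedLpNorm_le_of_le (hp : 0 < p) (hw : ∀ i, 0 ≤ w i) (hws : Summable w)
    (hw1 : ∑' i, w i ≤ 1) (hx : ∀ i, 0 ≤ x i) {M : ℝ} (hM : 0 ≤ M) (hxM : ∀ i, x i ≤ M) :
    weightedLpNorm w p x ≤ M := by
  have hconst : ∑' i, w i * M ^ p ≤ M ^ p := by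
    rw [tsum_mul_right]
    exact mul_le_of_le_one_left (rpow_nonneg hM p) hw1
  calc weightedLpNorm w p x ≤ weightedLpNorm w p (fun _ => M) :=
        weightedLpNorm_mono hp hw hx hxM (hws.mul_right _)
    _ ≤ (M ^ p) ^ (1 / p) :=
        rpow_le_rpow (tsum_nonneg fun i => mul_nonneg (hw i) (rpow_nonneg hM p)) hconst
          (by positivity)
    _ = M := by rw [← rpow_mul hM, mul_one_div_cancel hp.ne', rpow_one]

lemma tsum_mul_le_rpow_tsum_mul_rpow (hp : 1 ≤ p) (hw : ∀ i, 0 ≤ w i) (hws : Summable w)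
    (hw1 : ∑' i, w i ≤ 1) (hx : ∀ i, 0 ≤ x i) (hxs : Summable fun i => w i * x i ^ p) :
    ∑' i, w i * x i ≤ (∑' i, w i * x i ^ p) ^ p⁻¹ := by
  have hnonneg : ∀ i, 0 ≤ w i * x i ^ p := fun i => mul_nonneg (hw i) (rpow_nonneg (hx i) p)
  refine tsum_le_of_sum_le' (rpow_nonneg (tsum_nonneg hnonneg) _) fun s => ?_
  have hws_le : (∑ i ∈ s, w i) ^ (1 - p⁻¹) ≤ 1 :=
    rpow_le_one (Finset.sum_nonneg fun i _ => hw i)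
      ((hws.sum_le_tsum s fun i _ => hw i).trans hw1) (sub_nonneg.2 (inv_le_one_of_one_le₀ hp))
  calc ∑ i ∈ s, w i * x i
      ≤ (∑ i ∈ s, w i) ^ (1 - p⁻¹) * (∑ i ∈ s, w i * x i ^ p) ^ p⁻¹ :=
        inner_le_weight_mul_Lp_of_nonneg s hp w x hw hx
    _ ≤ 1 * (∑' i, w i * x i ^ p) ^ p⁻¹ :=
        mul_le_mul hws_le (rpow_le_rpow (Finset.sum_nonneg fun i _ => hnonneg i)
          (hxs.sum_le_tsum s fun i _ => hnonneg i) (by positivity))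
          (rpow_nonneg (Finset.sum_nonneg fun i _ => hnonneg i) _) zero_le_one
    _ = (∑' i, w i * x i ^ p) ^ p⁻¹ := one_mul _

lemma sqrt_tsum_mul_sq_le_weightedLpNorm (hp : 2 ≤ p) (hw : ∀ i, 0 ≤ w i) (hws : Summable w)
    (hw1 : ∑' i, w i ≤ 1) (hx : ∀ i, 0 ≤ x i) (hxs : Summable fun i => w i * x i ^ p) :
    √(∑' i, w i * x i ^ 2) ≤ weightedLpNorm w p x := by
  have hsq : ∀ i, (x i ^ 2) ^ (p / 2) = x i ^ p := fun i => by
    rw [← rpow_natCast, ← rpow_mul (hx i), Nat.cast_ofNat, mul_div_cancel₀ _ two_ne_zero]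
  have hmean := tsum_mul_le_rpow_tsum_mul_rpow (p := p / 2) (x := fun i => x i ^ 2)
    (by linarith) hw hws hw1 (fun i => sq_nonneg _) (by simpa only [hsq] using hxs)
  simp only [hsq] at hmean
  rw [sqrt_le_left (weightedLpNorm_nonneg hw hx), weightedLpNorm, ← rpow_natCast,
    ← rpow_mul (tsum_nonneg fun i => mul_nonneg (hw i) (rpow_nonneg (hx i) p)), Nat.cast_ofNat]
  convert hmean using 2
  field_simp

end WeightedLpNorm

noncomputable def geomWeight (α : ℝ) (n : ℕ) : ℝ :=
  (1 - α) * α ^ n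

noncomputable def tailRms (α : ℝ) (a : ℕ → ℝ) (n : ℕ) : ℝ :=
  √((1 - α) * ∑' k, a (n + 1 + k) ^ 2)

section Geometric

variable {α : ℝ}

lemma geomWeight_nonneg (hα0 : 0 ≤ α) (hα1 : α ≤ 1) (n : ℕ) : 0 ≤ geomWeight α n :=
  mul_nonneg (by linarith) (pow_nonneg hα0 n)

lemma summable_geomWeight (hα0 : 0 ≤ α) (hα1 : α < 1) : Summable (geomWeight α) :=
  (summable_geometric_of_lt_one hα0 hα1).mul_left _

lemma tsum_geomWeight (hα0 : 0 ≤ α) (hα1 : α < 1) : ∑' n, geomWeight α n = 1 := by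
  simp only [geomWeight, tsum_mul_left, tsum_geometric_of_lt_one hα0 hα1]
  exact mul_inv_cancel₀ (by linarith)

lemma weightedLpNorm_geomWeight (p : ℝ) (x : ℕ → ℝ) :
    weightedLpNorm (geomWeight α) p x = ((1 - α) * ∑' n, α ^ n * x n ^ p) ^ (1 / p) := by
  simp only [weightedLpNorm, geomWeight, mul_assoc, tsum_mul_left]

-- With `T n = ∑_{k ≥ n} u k` the summand is `α ^ n * T n - α ^ (n + 1) * T (n + 1)`,
-- so the series telescopes.
lemma tsum_geomWeight_mul_tail_add {u : ℕ → ℝ} (hα0 : 0 ≤ α) (hα1 : α < 1) (hu : ∀ n, 0 ≤ u n)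
    (hus : Summable u) :
    ∑' n, geomWeight α n * ((1 - α) * ∑' k, u (n + 1 + k) + u n) = (1 - α) * ∑' n, u n := by
  set T : ℕ → ℝ := fun n => ∑' k, u (n + k) with hT
  have hT_succ : ∀ n, T n = u n + T (n + 1) := fun n => by
    have hs : Summable fun k => u (n + k) := hus.comp_injective (add_right_injective n)
    show ∑' k, u (n + k) = u n + ∑' k, u (n + 1 + k)
    rw [hs.tsum_eq_zero_add]
    exact congrArg (u n + ·) (tsum_congr fun k => congrArg u (by ring))
  have hT_le : ∀ n, T n ≤ ∑' k, u k := fun n =>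
    tsum_comp_le_tsum_of_inj hus hu (add_right_injective n)
  have hf : Summable fun n => α ^ n * T n :=
    ((summable_geometric_of_lt_one hα0 hα1).mul_right (∑' k, u k)).of_nonneg_of_le
      (fun n => mul_nonneg (pow_nonneg hα0 n) (tsum_nonneg fun k => hu _))
      fun n => mul_le_mul_of_nonneg_left (hT_le n) (pow_nonneg hα0 n)
  calc ∑' n, geomWeight α n * ((1 - α) * T (n + 1) + u n)
      = (1 - α) * ∑' n, (α ^ n * T n - α ^ (n + 1) * T (n + 1)) := by
        rw [← tsum_mul_left]
        exact tsum_congr fun n => by rw [geomWeight, hT_succ n]; ring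
    _ = (1 - α) * ∑' n, u n := by
        have hf_succ : Summable fun n => α ^ (n + 1) * T (n + 1) :=
          hf.comp_injective (add_left_injective 1)
        rw [hf.tsum_sub hf_succ, hf.tsum_eq_zero_add]
        simp [hT]

end Geometric

section Tail

variable {α : ℝ} {a : ℕ → ℝ}

lemma tailRms_sq (hα1 : α ≤ 1) (n : ℕ) :
    tailRms α a n ^ 2 = (1 - α) * ∑' k, a (n + 1 + k) ^ 2 :=
  sq_sqrt (mul_nonneg (by linarith) (tsum_nonneg fun _ => sq_nonneg _))

lemma tailRms_le (hα1 : α ≤ 1) (has : Summable fun n => a n ^ 2) (n : ℕ) :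
    tailRms α a n ≤ √((1 - α) * ∑' k, a k ^ 2) :=
  sqrt_le_sqrt (mul_le_mul_of_nonneg_left
    (tsum_comp_le_tsum_of_inj has (fun _ => sq_nonneg _) (add_right_injective (n + 1)))
    (by linarith))

lemma le_sqrt_tsum_sq (ha : ∀ n, 0 ≤ a n) (has : Summable fun n => a n ^ 2) (n : ℕ) :
    a n ≤ √(∑' k, a k ^ 2) :=
  (le_sqrt (ha n) (tsum_nonneg fun _ => sq_nonneg _)).2 (has.le_tsum n fun _ _ => sq_nonneg _)

lemma sqrt_mul_tsum_sq_le (hα0 : 0 ≤ α) (hα1 : α < 1) (has : Summable fun n => a n ^ 2) :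
    √((1 - α) * ∑' n, a n ^ 2) ≤
      √(∑' n, geomWeight α n * tailRms α a n ^ 2) + √(∑' n, geomWeight α n * a n ^ 2) := by
  have hw := geomWeight_nonneg hα0 hα1.le
  have hws := summable_geomWeight hα0 hα1
  have hb : Summable fun n => geomWeight α n * tailRms α a n ^ 2 :=
    summable_mul_of_nonneg_of_le hw hws (fun _ => sq_nonneg _)
      fun n => pow_le_pow_left₀ (sqrt_nonneg _) (tailRms_le hα1.le has n) 2
  have ha : Summable fun n => geomWeight α n * a n ^ 2 :=
    summable_mul_of_nonneg_of_le hw hws (fun _ => sq_nonneg _)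
      fun n => has.le_tsum n fun _ _ => sq_nonneg _
  have hsplit : (1 - α) * ∑' n, a n ^ 2 =
      ∑' n, geomWeight α n * tailRms α a n ^ 2 + ∑' n, geomWeight α n * a n ^ 2 := by
    rw [← tsum_geomWeight_mul_tail_add hα0 hα1 (fun n => sq_nonneg (a n)) has, ← hb.tsum_add ha]
    exact tsum_congr fun n => by rw [tailRms_sq hα1.le]; ring
  rw [hsplit, sqrt_eq_rpow, sqrt_eq_rpow, sqrt_eq_rpow]
  exact rpow_add_le_add_rpow (tsum_nonneg fun n => mul_nonneg (hw n) (sq_nonneg _))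
    (tsum_nonneg fun n => mul_nonneg (hw n) (sq_nonneg _)) (by norm_num) (by norm_num)

end Tail

section Comparison

variable {α p : ℝ} {a : ℕ → ℝ}

lemma weightedLpNorm_geomWeight_tail_le (hα0 : 0 ≤ α) (hα1 : α < 1) (ha : ∀ n, 0 ≤ a n)
    (has : Summable fun n => a n ^ 2) (hp : 1 ≤ p) :
    weightedLpNorm (geomWeight α) p (fun n => p * a n + √p * tailRms α a n) ≤
      p * weightedLpNorm (geomWeight α) p a + √p * √((1 - α) * ∑' n, a n ^ 2) := by
  have hw := geomWeight_nonneg hα0 hα1.le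
  have hws := summable_geomWeight hα0 hα1
  have hp0 : 0 < p := by linarith
  have hpa : ∀ n, 0 ≤ p * a n := fun n => mul_nonneg hp0.le (ha n)
  have hb : ∀ n, 0 ≤ tailRms α a n := fun n => sqrt_nonneg _
  have hpb : ∀ n, 0 ≤ √p * tailRms α a n := fun n => mul_nonneg (sqrt_nonneg p) (hb n)
  calc weightedLpNorm (geomWeight α) p (fun n => p * a n + √p * tailRms α a n)
      ≤ weightedLpNorm (geomWeight α) p (fun n => p * a n) +
          weightedLpNorm (geomWeight α) p (fun n => √p * tailRms α a n) :=
        weightedLpNorm_add_le hp hw hpa hpb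
          (summable_mul_rpow_of_le hp0.le hw hws hpa
            fun n => mul_le_mul_of_nonneg_left (le_sqrt_tsum_sq ha has n) hp0.le)
          (summable_mul_rpow_of_le hp0.le hw hws hpb
            fun n => mul_le_mul_of_nonneg_left (tailRms_le hα1.le has n) (sqrt_nonneg p))
    _ = p * weightedLpNorm (geomWeight α) p a +
          √p * weightedLpNorm (geomWeight α) p (tailRms α a) := by
        rw [weightedLpNorm_const_mul hp0 hw ha hp0.le,
          weightedLpNorm_const_mul hp0 hw hb (sqrt_nonneg p)]
    _ ≤ p * weightedLpNorm (geomWeight α) p a + √p * √((1 - α) * ∑' n, a n ^ 2) := by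
        gcongr
        exact weightedLpNorm_le_of_le hp0 hw hws (tsum_geomWeight hα0 hα1).le hb (sqrt_nonneg _)
          (tailRms_le hα1.le has)

lemma le_three_mul_weightedLpNorm_geomWeight_tail (hα0 : 0 ≤ α) (hα1 : α < 1)
    (ha : ∀ n, 0 ≤ a n) (has : Summable fun n => a n ^ 2) (hp : 2 ≤ p) :
    p * weightedLpNorm (geomWeight α) p a + √p * √((1 - α) * ∑' n, a n ^ 2) ≤
      3 * weightedLpNorm (geomWeight α) p (fun n => p * a n + √p * tailRms α a n) := by
  have hw := geomWeight_nonneg hα0 hα1.le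
  have hws := summable_geomWeight hα0 hα1
  have hw1 := (tsum_geomWeight hα0 hα1).le
  have hp0 : 0 < p := by linarith
  have hb : ∀ n, 0 ≤ tailRms α a n := fun n => sqrt_nonneg _
  have hpa : ∀ n, 0 ≤ p * a n := fun n => mul_nonneg hp0.le (ha n)
  have hpb : ∀ n, 0 ≤ √p * tailRms α a n := fun n => mul_nonneg (sqrt_nonneg p) (hb n)
  have hRs : Summable fun n => geomWeight α n * (p * a n + √p * tailRms α a n) ^ p :=
    summable_mul_rpow_of_le hp0.le hw hws (fun n => add_nonneg (hpa n) (hpb n)) fun n =>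
      add_le_add (mul_le_mul_of_nonneg_left (le_sqrt_tsum_sq ha has n) hp0.le)
        (mul_le_mul_of_nonneg_left (tailRms_le hα1.le has n) (sqrt_nonneg p))
  have hAR : p * weightedLpNorm (geomWeight α) p a ≤
      weightedLpNorm (geomWeight α) p (fun n => p * a n + √p * tailRms α a n) := by
    rw [← weightedLpNorm_const_mul hp0 hw ha hp0.le]
    exact weightedLpNorm_mono hp0 hw hpa (fun n => le_add_of_nonneg_right (hpb n)) hRs
  have hBR : √p * weightedLpNorm (geomWeight α) p (tailRms α a) ≤
      weightedLpNorm (geomWeight α) p (fun n => p * a n + √p * tailRms α a n) := by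
    rw [← weightedLpNorm_const_mul hp0 hw hb (sqrt_nonneg p)]
    exact weightedLpNorm_mono hp0 hw hpb (fun n => le_add_of_nonneg_left (hpa n)) hRs
  have hS : √((1 - α) * ∑' n, a n ^ 2) ≤
      weightedLpNorm (geomWeight α) p (tailRms α a) + weightedLpNorm (geomWeight α) p a :=
    (sqrt_mul_tsum_sq_le hα0 hα1 has).trans (add_le_add
      (sqrt_tsum_mul_sq_le_weightedLpNorm hp hw hws hw1 hb
        (summable_mul_rpow_of_le hp0.le hw hws hb (tailRms_le hα1.le has)))
      (sqrt_tsum_mul_sq_le_weightedLpNorm hp hw hws hw1 ha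
        (summable_mul_rpow_of_le hp0.le hw hws ha (le_sqrt_tsum_sq ha has))))
  have hsqrt_le : √p ≤ p := (sqrt_le_left hp0.le).2 (by nlinarith)
  have hpS := mul_le_mul_of_nonneg_left hS (sqrt_nonneg p)
  have hpA := mul_le_mul_of_nonneg_right hsqrt_le (weightedLpNorm_nonneg (p := p) hw ha)
  rw [mul_add] at hpS
  linarith

end Comparison

theorem stmt2 :
    ∃ C₁ C₂ : ℝ, 0 < C₁ ∧ 0 < C₂ ∧
    ∀ (α : ℝ) (a : ℕ → ℝ),
      0 ≤ α → α < 1 → (∀ n, 0 ≤ a n) → Antitone a →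
      Summable (fun n => (a n) ^ 2) →
      ∀ p : ℝ, 2 ≤ p →
        C₁ * (p * (1 - α) ^ (1 / p) * (∑' n, α ^ n * (a n) ^ p) ^ (1 / p) + Real.sqrt p * Real.sqrt ((1 - α) * ∑' n, (a n) ^ 2)) ≤ ((1 - α) * ∑' n, α ^ n * (p * a n + Real.sqrt p * Real.sqrt ((1 - α) * ∑' k, (a (n + 1 + k)) ^ 2)) ^ p) ^ (1 / p) ∧
        ((1 - α) * ∑' n, α ^ n * (p * a n + Real.sqrt p * Real.sqrt ((1 - α) * ∑' k, (a (n + 1 + k)) ^ 2)) ^ p) ^ (1 / p) ≤ C₂ * (p * (1 - α) ^ (1 / p) * (∑' n, α ^ n * (a n) ^ p) ^ (1 / p) + Real.sqrt p * Real.sqrt ((1 - α) * ∑' n, (a n) ^ 2)) := by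
  refine ⟨1 / 3, 1, by norm_num, by norm_num, fun α a hα0 hα1 ha _ has p hp => ?_⟩
  have hA : p * (1 - α) ^ (1 / p) * (∑' n, α ^ n * a n ^ p) ^ (1 / p) =
      p * weightedLpNorm (geomWeight α) p a := by
    rw [weightedLpNorm_geomWeight, mul_rpow (by linarith)
      (tsum_nonneg fun n => mul_nonneg (pow_nonneg hα0 n) (rpow_nonneg (ha n) p)), mul_assoc]
  have hR : ((1 - α) * ∑' n, α ^ n *
        (p * a n + √p * √((1 - α) * ∑' k, a (n + 1 + k) ^ 2)) ^ p) ^ (1 / p) =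
      weightedLpNorm (geomWeight α) p (fun n => p * a n + √p * tailRms α a n) :=
    (weightedLpNorm_geomWeight p _).symm
  have hlower := le_three_mul_weightedLpNorm_geomWeight_tail hα0 hα1 ha has hp
  have hupper := weightedLpNorm_geomWeight_tail_le hα0 hα1 ha has (by linarith : 1 ≤ p)
  rw [hA, hR]
  constructor <;> linarith
end

section
/- There exist universal constants C₁, C₂ ∈ (0,∞) with the following property. Assume ∑_{n≥1} a_n² < ∞. Then for every n ≥ 1 and every real p ≥ 2, C₁ · ( p·a_n + √p · ( (1−α) ∑_{k>n} a_k² )^{1/2} ) ≤ ( 𝔼[ ( p·a_n + √p · ( ∑_{k>n} κ_k a_k² )^{1/2} )^p ] )^{1/p} ≤ C₂ · ( p·a_n + √p · ( (1−α) ∑_{k>n} a_k² )^{1/2} ). -/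
/-!
Write `S = ∑_{k>n} κ_k a_k²` and `Z = p a_n + √p √S`. From below, `Z ≥ p a_n` and
`Z ≥ √p √S`, and Jensen's inequality gives `𝔼 S^{p/2} ≥ (𝔼 S)^{p/2}` since `p/2 ≥ 1`.

From above, the summands of `S` are independent and lie in `[0, a_n²]`. For `t a_n² ≤ 1`,
`eˣ ≤ 1 + 2x` on `[0, 1]` gives `𝔼 e^{tS} ≤ e^{2t 𝔼 S}`, and `x^q ≤ (q/t)^q e^{tx - q}` then
yields, with `t = q / (𝔼 S + q a_n²)`, the Bernstein-type moment bound
`‖S‖_q ≤ e (𝔼 S + q a_n²)`. Taking `q = p/2` bounds `‖Z‖_p` by a constant multiple of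
`p a_n + √p √(𝔼 S)`, and `𝔼 S = (1 - α) ∑_{k>n} a_k²`.
-/

open MeasureTheory ProbabilityTheory Filter Topology

lemma exp_le_one_add_two_mul {t : ℝ} (h0 : 0 ≤ t) (h1 : t ≤ 1) : Real.exp t ≤ 1 + 2 * t := by
  have h := Real.abs_exp_sub_one_sub_id_le (abs_le.mpr ⟨by linarith, h1⟩)
  nlinarith [le_abs_self (Real.exp t - 1 - t)]

lemma rpow_le_mul_exp {x q t : ℝ} (hx : 0 ≤ x) (hq : 0 < q) (ht : 0 < t) :
    x ^ q ≤ (q / t) ^ q * Real.exp (t * x - q) := by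
  have key : t * x / q ≤ Real.exp (t * x / q - 1) := by
    linarith [Real.add_one_le_exp (t * x / q - 1)]
  calc x ^ q = (q / t) ^ q * (t * x / q) ^ q := by
        rw [← Real.mul_rpow (by positivity) (by positivity)]
        congr 1
        field_simp
    _ ≤ (q / t) ^ q * Real.exp (t * x / q - 1) ^ q := by gcongr
    _ = (q / t) ^ q * Real.exp (t * x - q) := by
        rw [← Real.exp_mul]
        congr 2
        field_simp

lemma rpow_add_le_two_rpow_mul {x y p : ℝ} (hx : 0 ≤ x) (hy : 0 ≤ y) (hp : 1 ≤ p) :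
    (x + y) ^ p ≤ 2 ^ (p - 1) * (x ^ p + y ^ p) := by
  lift x to NNReal using hx
  lift y to NNReal using hy
  exact_mod_cast NNReal.rpow_add_le_mul_rpow_add_rpow x y hp

lemma le_rpow_one_div_of_rpow_le {x y p : ℝ} (hx : 0 ≤ x) (hp : 0 < p) (h : x ^ p ≤ y) :
    x ≤ y ^ (1 / p) := by
  rwa [one_div, Real.le_rpow_inv_iff_of_pos hx ((Real.rpow_nonneg hx p).trans h) hp]

lemma sqrt_mul_sqrt_rpow {p x : ℝ} (hp : 0 ≤ p) (hx : 0 ≤ x) :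
    (Real.sqrt p * Real.sqrt x) ^ p = p ^ (p / 2) * x ^ (p / 2) := by
  rw [Real.mul_rpow (Real.sqrt_nonneg p) (Real.sqrt_nonneg x), Real.rpow_div_two_eq_sqrt p hp,
    Real.rpow_div_two_eq_sqrt p hx]

section Exponential

variable {Ω : Type*} [MeasurableSpace Ω] {P : Measure Ω} [IsProbabilityMeasure P] {t : ℝ}

lemma integral_exp_mul_le {X : Ω → ℝ} (hX : Measurable X) (hXi : Integrable X P)
    (hX0 : ∀ ω, 0 ≤ t * X ω) (hX1 : ∀ ω, t * X ω ≤ 1) :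
    ∫ ω, Real.exp (t * X ω) ∂P ≤ Real.exp (2 * t * ∫ ω, X ω ∂P) := by
  have hle : ∀ ω, Real.exp (t * X ω) ≤ 1 + 2 * (t * X ω) := fun ω =>
    exp_le_one_add_two_mul (hX0 ω) (hX1 ω)
  have hlin : Integrable (fun ω => 1 + 2 * (t * X ω)) P :=
    (integrable_const 1).add ((hXi.const_mul t).const_mul 2)
  have hexp : Integrable (fun ω => Real.exp (t * X ω)) P :=
    hlin.mono' (by fun_prop) (ae_of_all _ fun ω => by
      rw [Real.norm_of_nonneg (Real.exp_pos _).le]; exact hle ω)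
  calc ∫ ω, Real.exp (t * X ω) ∂P ≤ ∫ ω, 1 + 2 * (t * X ω) ∂P := integral_mono hexp hlin hle
    _ = 1 + 2 * t * ∫ ω, X ω ∂P := by
        rw [integral_add (integrable_const 1) ((hXi.const_mul t).const_mul 2), integral_const,
          integral_const_mul, integral_const_mul]
        simp only [probReal_univ, one_smul]
        ring
    _ ≤ Real.exp (2 * t * ∫ ω, X ω ∂P) := by linarith [Real.add_one_le_exp (2 * t * ∫ ω, X ω ∂P)]

lemma ProbabilityTheory.iIndepFun.integral_exp_mul_sum_le {ι : Type*} {X : ι → Ω → ℝ}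
    (hind : iIndepFun X P) (hX : ∀ i, Measurable (X i)) (hXi : ∀ i, Integrable (X i) P)
    (hX0 : ∀ i ω, 0 ≤ t * X i ω) (hX1 : ∀ i ω, t * X i ω ≤ 1) (s : Finset ι) :
    ∫ ω, Real.exp (t * ∑ i ∈ s, X i ω) ∂P ≤ Real.exp (2 * t * ∫ ω, ∑ i ∈ s, X i ω ∂P) := by
  have hmgf := hind.mgf_sum hX s (t := t)
  simp only [mgf, Finset.sum_apply] at hmgf
  rw [hmgf, integral_finsetSum s fun i _ => hXi i, Finset.mul_sum, Real.exp_sum]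
  exact Finset.prod_le_prod (fun i _ => integral_nonneg fun ω => (Real.exp_pos _).le)
    fun i _ => integral_exp_mul_le (hX i) (hXi i) (hX0 i) (hX1 i)

end Exponential

lemma integrable_comp_of_mem_Icc {Ω : Type*} [MeasurableSpace Ω] {P : Measure Ω}
    [IsFiniteMeasure P] {S : Ω → ℝ} {g : ℝ → ℝ} {T : ℝ} (hS : Measurable S)
    (hST : ∀ ω, S ω ∈ Set.Icc 0 T) (hg : Continuous g) : Integrable (fun ω => g (S ω)) P := by
  obtain ⟨C, hC⟩ := isCompact_Icc.exists_bound_of_continuousOn hg.continuousOn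
  exact Integrable.of_bound (hg.measurable.comp hS).aestronglyMeasurable C
    (ae_of_all _ fun ω => hC _ (hST ω))

section CountableSum

variable {Ω : Type*} {X : ℕ → Ω → ℝ} {c : ℕ → ℝ}

lemma summable_of_le_summable (hX0 : ∀ i ω, 0 ≤ X i ω) (hXc : ∀ i ω, X i ω ≤ c i)
    (hc : Summable c) (ω : Ω) : Summable fun i => X i ω :=
  hc.of_nonneg_of_le (hX0 · ω) (hXc · ω)

lemma tsum_mem_Icc_of_le_summable (hX0 : ∀ i ω, 0 ≤ X i ω) (hXc : ∀ i ω, X i ω ≤ c i)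
    (hc : Summable c) (ω : Ω) : ∑' i, X i ω ∈ Set.Icc 0 (∑' i, c i) :=
  ⟨tsum_nonneg (hX0 · ω), (summable_of_le_summable hX0 hXc hc ω).tsum_le_tsum (hXc · ω) hc⟩

lemma sum_range_mem_Icc_of_le_summable (hX0 : ∀ i ω, 0 ≤ X i ω) (hXc : ∀ i ω, X i ω ≤ c i)
    (hc : Summable c) (N : ℕ) (ω : Ω) :
    ∑ i ∈ Finset.range N, X i ω ∈ Set.Icc 0 (∑' i, c i) :=
  ⟨Finset.sum_nonneg fun i _ => hX0 i ω,
    ((summable_of_le_summable hX0 hXc hc ω).sum_le_tsum _ fun i _ => hX0 i ω).trans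
      (tsum_mem_Icc_of_le_summable hX0 hXc hc ω).2⟩

variable [MeasurableSpace Ω] {P : Measure Ω} [IsProbabilityMeasure P]

lemma measurable_tsum_of_le_summable (hX : ∀ i, Measurable (X i)) (hX0 : ∀ i ω, 0 ≤ X i ω)
    (hXc : ∀ i ω, X i ω ≤ c i) (hc : Summable c) : Measurable fun ω => ∑' i, X i ω :=
  measurable_of_tendsto_metrizable (fun N => Finset.measurable_sum (Finset.range N) fun i _ => hX i)
    (tendsto_pi_nhds.2 fun ω => (summable_of_le_summable hX0 hXc hc ω).hasSum.tendsto_sum_nat)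

lemma tendsto_integral_comp_sum_range (hX : ∀ i, Measurable (X i)) (hX0 : ∀ i ω, 0 ≤ X i ω)
    (hXc : ∀ i ω, X i ω ≤ c i) (hc : Summable c) {g : ℝ → ℝ} (hg : Continuous g) :
    Tendsto (fun N => ∫ ω, g (∑ i ∈ Finset.range N, X i ω) ∂P) atTop
      (𝓝 (∫ ω, g (∑' i, X i ω) ∂P)) := by
  obtain ⟨C, hC⟩ := isCompact_Icc.exists_bound_of_continuousOn hg.continuousOn
  refine tendsto_integral_filter_of_norm_le_const
    (Eventually.of_forall fun N => (hg.measurable.comp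
      (Finset.measurable_sum _ fun i _ => hX i)).aestronglyMeasurable)
    ⟨C, Eventually.of_forall fun N => ae_of_all _ fun ω =>
      hC _ (sum_range_mem_Icc_of_le_summable hX0 hXc hc N ω)⟩
    (ae_of_all _ fun ω => (hg.tendsto _).comp
      (summable_of_le_summable hX0 hXc hc ω).hasSum.tendsto_sum_nat)

lemma ProbabilityTheory.iIndepFun.integral_exp_mul_tsum_le (hind : iIndepFun X P)
    (hX : ∀ i, Measurable (X i)) (hX0 : ∀ i ω, 0 ≤ X i ω) (hXc : ∀ i ω, X i ω ≤ c i)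
    (hc : Summable c) {t : ℝ} (ht : 0 ≤ t) (hX1 : ∀ i ω, t * X i ω ≤ 1) :
    ∫ ω, Real.exp (t * ∑' i, X i ω) ∂P ≤ Real.exp (2 * t * ∫ ω, ∑' i, X i ω ∂P) := by
  have hmem := tsum_mem_Icc_of_le_summable hX0 hXc hc
  have hmemN := sum_range_mem_Icc_of_le_summable hX0 hXc hc
  have hmeas := measurable_tsum_of_le_summable hX hX0 hXc hc
  have hXi : ∀ i, Integrable (X i) P := fun i =>
    integrable_comp_of_mem_Icc (g := id) (hX i) (fun ω => ⟨hX0 i ω, hXc i ω⟩) continuous_id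
  refine le_of_tendsto (tendsto_integral_comp_sum_range hX hX0 hXc hc
    (g := fun x => Real.exp (t * x)) (by fun_prop)) (Eventually.of_forall fun N => ?_)
  have hpartial : ∫ ω, ∑ i ∈ Finset.range N, X i ω ∂P ≤ ∫ ω, ∑' i, X i ω ∂P :=
    integral_mono
      (integrable_comp_of_mem_Icc (g := id) (Finset.measurable_sum _ fun i _ => hX i)
        (hmemN N) continuous_id)
      (integrable_comp_of_mem_Icc (g := id) hmeas hmem continuous_id)
      fun ω => (summable_of_le_summable hX0 hXc hc ω).sum_le_tsum _ fun i _ => hX0 i ω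
  calc ∫ ω, Real.exp (t * ∑ i ∈ Finset.range N, X i ω) ∂P
      ≤ Real.exp (2 * t * ∫ ω, ∑ i ∈ Finset.range N, X i ω ∂P) :=
        hind.integral_exp_mul_sum_le hX hXi (fun i ω => mul_nonneg ht (hX0 i ω)) hX1 _
    _ ≤ Real.exp (2 * t * ∫ ω, ∑' i, X i ω ∂P) := by gcongr

lemma ProbabilityTheory.iIndepFun.integral_tsum_rpow_le (hind : iIndepFun X P)
    (hX : ∀ i, Measurable (X i)) (hX0 : ∀ i ω, 0 ≤ X i ω) (hXc : ∀ i ω, X i ω ≤ c i)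
    (hc : Summable c) {b q : ℝ} (hXb : ∀ i ω, X i ω ≤ b) (hq : 0 < q) :
    ∫ ω, (∑' i, X i ω) ^ q ∂P ≤ (Real.exp 1 * (∫ ω, ∑' i, X i ω ∂P + q * b)) ^ q := by
  have hmem := tsum_mem_Icc_of_le_summable hX0 hXc hc
  have hmeas := measurable_tsum_of_le_summable hX hX0 hXc hc
  set μ := ∫ ω, ∑' i, X i ω ∂P
  have hμ : 0 ≤ μ := integral_nonneg fun ω => (hmem ω).1
  have hb : 0 ≤ b := by
    obtain ⟨ω⟩ := nonempty_of_isProbabilityMeasure P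
    exact (hX0 0 ω).trans (hXb 0 ω)
  rcases (add_nonneg hμ (mul_nonneg hq.le hb)).eq_or_lt with hL | hL
  · have hX' : ∀ i ω, X i ω = 0 := fun i ω =>
      le_antisymm ((hXb i ω).trans (by nlinarith)) (hX0 i ω)
    rw [← hL, mul_zero, Real.zero_rpow hq.ne']
    simp [hX', Real.zero_rpow hq.ne']
  set L := μ + q * b
  set t := q / L
  have ht : 0 < t := div_pos hq hL
  have htX : ∀ i ω, t * X i ω ≤ 1 := fun i ω => by
    calc t * X i ω ≤ t * b := mul_le_mul_of_nonneg_left (hXb i ω) ht.le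
      _ ≤ 1 := by rw [div_mul_eq_mul_div, div_le_one hL]; linarith
  have htμ : t * μ ≤ q := by
    rw [div_mul_eq_mul_div, div_le_iff₀ hL]
    exact mul_le_mul_of_nonneg_left (by nlinarith) hq.le
  have hqt : q / t = L := div_div_cancel₀ hq.ne'
  calc ∫ ω, (∑' i, X i ω) ^ q ∂P
      ≤ ∫ ω, (q / t) ^ q * Real.exp (t * ∑' i, X i ω - q) ∂P :=
        integral_mono (integrable_comp_of_mem_Icc hmeas hmem (Real.continuous_rpow_const hq.le))
          (integrable_comp_of_mem_Icc (g := fun x => (q / t) ^ q * Real.exp (t * x - q))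
            hmeas hmem (by fun_prop))
          fun ω => rpow_le_mul_exp (hmem ω).1 hq ht
    _ = L ^ q * Real.exp (-q) * ∫ ω, Real.exp (t * ∑' i, X i ω) ∂P := by
        rw [← integral_const_mul, hqt]
        congr 1 with ω
        rw [sub_eq_add_neg, Real.exp_add]
        ring
    _ ≤ L ^ q * Real.exp (-q) * Real.exp (2 * q) := by
        gcongr
        calc ∫ ω, Real.exp (t * ∑' i, X i ω) ∂P ≤ Real.exp (2 * t * μ) :=
              hind.integral_exp_mul_tsum_le hX hX0 hXc hc ht.le htX
          _ ≤ Real.exp (2 * q) := Real.exp_le_exp.2 (by linarith)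
    _ = (Real.exp 1 * L) ^ q := by
        rw [Real.mul_rpow (Real.exp_pos 1).le hL.le, Real.exp_one_rpow, mul_assoc,
          ← Real.exp_add]
        ring_nf

end CountableSum

section MomentsOfSqrt

variable {Ω : Type*} [MeasurableSpace Ω] {P : Measure Ω} [IsProbabilityMeasure P]
  {S : Ω → ℝ} {T u p : ℝ}

lemma half_add_le_integral_add_sqrt_rpow (hS : Measurable S) (hST : ∀ ω, S ω ∈ Set.Icc 0 T)
    (hu : 0 ≤ u) (hp : 2 ≤ p) :
    (1 / 2) * (u + Real.sqrt p * Real.sqrt (∫ ω, S ω ∂P))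
      ≤ (∫ ω, (u + Real.sqrt p * Real.sqrt (S ω)) ^ p ∂P) ^ (1 / p) := by
  have hp0 : 0 < p := by linarith
  have hZ := integrable_comp_of_mem_Icc (P := P) hS hST
    (g := fun x => (u + Real.sqrt p * Real.sqrt x) ^ p)
    ((Real.continuous_rpow_const hp0.le).comp (by fun_prop))
  have hV := integrable_comp_of_mem_Icc (P := P) hS hST
    (g := fun x => (Real.sqrt p * Real.sqrt x) ^ p)
    ((Real.continuous_rpow_const hp0.le).comp (by fun_prop))
  have hS_int := integrable_comp_of_mem_Icc (P := P) hS hST (g := id) continuous_id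
  have hSq_int := integrable_comp_of_mem_Icc (P := P) hS hST
    (Real.continuous_rpow_const (by linarith : (0 : ℝ) ≤ p / 2))
  have hV0 : ∀ ω, 0 ≤ Real.sqrt p * Real.sqrt (S ω) := fun ω => by positivity
  have hu_le : u ≤ (∫ ω, (u + Real.sqrt p * Real.sqrt (S ω)) ^ p ∂P) ^ (1 / p) := by
    refine le_rpow_one_div_of_rpow_le hu hp0 ?_
    have := integral_mono (integrable_const (u ^ p)) hZ
      fun ω => Real.rpow_le_rpow hu (le_add_of_nonneg_right (hV0 ω)) hp0.le
    simpa using this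
  have hjensen : (∫ ω, S ω ∂P) ^ (p / 2) ≤ ∫ ω, S ω ^ (p / 2) ∂P :=
    (convexOn_rpow (by linarith)).map_integral_le
      (Real.continuous_rpow_const (by linarith)).continuousOn
      isClosed_Ici (ae_of_all _ fun ω => (hST ω).1) hS_int hSq_int
  have hsqrt_le : Real.sqrt p * Real.sqrt (∫ ω, S ω ∂P)
      ≤ (∫ ω, (u + Real.sqrt p * Real.sqrt (S ω)) ^ p ∂P) ^ (1 / p) := by
    refine le_rpow_one_div_of_rpow_le (by positivity) hp0 ?_
    calc (Real.sqrt p * Real.sqrt (∫ ω, S ω ∂P)) ^ p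
        = p ^ (p / 2) * (∫ ω, S ω ∂P) ^ (p / 2) :=
          sqrt_mul_sqrt_rpow hp0.le (integral_nonneg fun ω => (hST ω).1)
      _ ≤ p ^ (p / 2) * ∫ ω, S ω ^ (p / 2) ∂P := by gcongr
      _ = ∫ ω, (Real.sqrt p * Real.sqrt (S ω)) ^ p ∂P := by
          rw [← integral_const_mul]
          exact integral_congr_ae
            (ae_of_all _ fun ω => (sqrt_mul_sqrt_rpow hp0.le (hST ω).1).symm)
      _ ≤ ∫ ω, (u + Real.sqrt p * Real.sqrt (S ω)) ^ p ∂P :=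
          integral_mono hV hZ fun ω =>
            Real.rpow_le_rpow (hV0 ω) (le_add_of_nonneg_left hu) hp0.le
  linarith

lemma integral_add_sqrt_rpow_le (hS : Measurable S) (hST : ∀ ω, S ω ∈ Set.Icc 0 T)
    (hu : 0 ≤ u) (hp : 2 ≤ p) {M : ℝ} (hM : 0 ≤ M)
    (hSM : ∫ ω, S ω ^ (p / 2) ∂P ≤ M ^ (p / 2)) :
    (∫ ω, (u + Real.sqrt p * Real.sqrt (S ω)) ^ p ∂P) ^ (1 / p)
      ≤ 2 * (u + Real.sqrt p * Real.sqrt M) := by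
  have hp0 : 0 < p := by linarith
  have hZ := integrable_comp_of_mem_Icc (P := P) hS hST
    (g := fun x => (u + Real.sqrt p * Real.sqrt x) ^ p)
    ((Real.continuous_rpow_const hp0.le).comp (by fun_prop))
  have hV := integrable_comp_of_mem_Icc (P := P) hS hST
    (g := fun x => (Real.sqrt p * Real.sqrt x) ^ p)
    ((Real.continuous_rpow_const hp0.le).comp (by fun_prop))
  set w := Real.sqrt p * Real.sqrt M
  have hw : 0 ≤ w := by positivity
  have hZw : ∫ ω, (u + Real.sqrt p * Real.sqrt (S ω)) ^ p ∂P ≤ 2 ^ (p - 1) * (u ^ p + w ^ p) :=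
    calc ∫ ω, (u + Real.sqrt p * Real.sqrt (S ω)) ^ p ∂P
        ≤ ∫ ω, 2 ^ (p - 1) * (u ^ p + (Real.sqrt p * Real.sqrt (S ω)) ^ p) ∂P :=
          integral_mono hZ (((integrable_const _).add hV).const_mul _)
            fun ω => rpow_add_le_two_rpow_mul hu (by positivity) (by linarith)
      _ = 2 ^ (p - 1) * (u ^ p + p ^ (p / 2) * ∫ ω, S ω ^ (p / 2) ∂P) := by
          rw [integral_const_mul, integral_add (integrable_const _) hV, integral_const,
            ← integral_const_mul]
          simp only [probReal_univ, one_smul, sqrt_mul_sqrt_rpow hp0.le (hST _).1]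
      _ ≤ 2 ^ (p - 1) * (u ^ p + w ^ p) := by
          rw [sqrt_mul_sqrt_rpow hp0.le hM]
          gcongr
  have htwo : ((2 : ℝ) ^ (p - 1)) ^ (1 / p) ≤ 2 := by
    rw [← Real.rpow_mul (by norm_num)]
    refine (Real.rpow_le_rpow_of_exponent_le one_le_two ?_).trans_eq (Real.rpow_one 2)
    rw [← div_eq_mul_one_div, div_le_one hp0]
    linarith
  calc (∫ ω, (u + Real.sqrt p * Real.sqrt (S ω)) ^ p ∂P) ^ (1 / p)
      ≤ (2 ^ (p - 1) * (u ^ p + w ^ p)) ^ (1 / p) :=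
        Real.rpow_le_rpow (integral_nonneg fun ω => by positivity) hZw (by positivity)
    _ = (2 ^ (p - 1)) ^ (1 / p) * (u ^ p + w ^ p) ^ (1 / p) :=
        Real.mul_rpow (by positivity) (by positivity)
    _ ≤ 2 * (u + w) := by
        gcongr
        exact Real.rpow_add_rpow_le_add hu hw (by linarith)

end MomentsOfSqrt

lemma integral_eq_one_sub_measureReal_of_mem_zero_one {Ω : Type*} [MeasurableSpace Ω]
    {P : Measure Ω} [IsProbabilityMeasure P] {κ : Ω → ℝ} (hκ : Measurable κ)
    (h01 : ∀ ω, κ ω = 0 ∨ κ ω = 1) : ∫ ω, κ ω ∂P = 1 - P.real {ω | κ ω = 0} := by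
  have hκ_eq : ∀ ω, κ ω = 1 - {ω | κ ω = 0}.indicator 1 ω := fun ω => by
    rcases h01 ω with h | h <;> simp [Set.indicator, h]
  have hset : MeasurableSet {ω | κ ω = 0} := hκ (measurableSet_singleton 0)
  rw [integral_congr_ae (ae_of_all _ hκ_eq), integral_sub (integrable_const 1)
    ((integrable_const 1).indicator hset), integral_indicator_one hset]
  simp

lemma sqrt_mul_sqrt_exp_one_mul_le {p μ a : ℝ} (hp : 0 ≤ p) (hμ : 0 ≤ μ) (ha : 0 ≤ a) :
    Real.sqrt p * Real.sqrt (Real.exp 1 * (μ + p / 2 * a ^ 2))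
      ≤ 2 * (p * a + Real.sqrt p * Real.sqrt μ) := by
  have he := Real.exp_one_lt_d9
  have hsp := Real.sq_sqrt hp
  have hsμ := Real.sq_sqrt hμ
  have h0 : 0 ≤ Real.sqrt p * Real.sqrt μ := by positivity
  rw [← Real.sqrt_mul hp]
  calc Real.sqrt (p * (Real.exp 1 * (μ + p / 2 * a ^ 2)))
      ≤ Real.sqrt ((2 * (p * a + Real.sqrt p * Real.sqrt μ)) ^ 2) := by
        refine Real.sqrt_le_sqrt ?_
        have : p * (Real.exp 1 * (μ + p / 2 * a ^ 2)) ≤ 3 * (p * μ) + 2 * (p * a) ^ 2 := by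
          nlinarith [mul_nonneg hp hμ, mul_nonneg (mul_nonneg hp hp) (sq_nonneg a)]
        nlinarith [mul_nonneg (mul_nonneg hp ha) h0]
    _ = 2 * (p * a + Real.sqrt p * Real.sqrt μ) := Real.sqrt_sq (by positivity)

lemma mul_mem_Icc_of_eq_zero_or_eq_one {k c : ℝ} (hk : k = 0 ∨ k = 1) (hc : 0 ≤ c) :
    k * c ∈ Set.Icc 0 c := by
  rcases hk with rfl | rfl <;> simp [hc]

lemma integral_tsum_mul_of_mem_zero_one {Ω : Type*} [MeasurableSpace Ω] {P : Measure Ω}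
    [IsProbabilityMeasure P] {κ : ℕ → Ω → ℝ} {c : ℕ → ℝ} {α : ℝ} (hκ : ∀ k, Measurable (κ k))
    (h01 : ∀ k ω, κ k ω = 0 ∨ κ k ω = 1) (hκP : ∀ k, P {ω | κ k ω = 0} = ENNReal.ofReal α)
    (hα : 0 ≤ α) (hc0 : ∀ k, 0 ≤ c k) (hc : Summable c) :
    ∫ ω, ∑' k, κ k ω * c k ∂P = (1 - α) * ∑' k, c k := by
  have hmem : ∀ k ω, κ k ω * c k ∈ Set.Icc 0 (c k) := fun k ω =>
    mul_mem_Icc_of_eq_zero_or_eq_one (h01 k ω) (hc0 k)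
  have hXi : ∀ k, Integrable (fun ω => κ k ω * c k) P := fun k =>
    integrable_comp_of_mem_Icc (g := id) ((hκ k).mul_const _) (hmem k) continuous_id
  have hEX : ∀ k, ∫ ω, κ k ω * c k ∂P = (1 - α) * c k := fun k => by
    rw [integral_mul_const, integral_eq_one_sub_measureReal_of_mem_zero_one (hκ k) (h01 k),
      measureReal_def, hκP, ENNReal.toReal_ofReal hα]
  have hnorm : ∀ k, ∫ ω, ‖κ k ω * c k‖ ∂P = (1 - α) * c k := fun k => by
    simp only [Real.norm_of_nonneg (hmem k _).1, hEX]
  rw [← integral_tsum_of_summable_integral_norm hXi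
    (by simpa only [hnorm] using hc.mul_left (1 - α))]
  simp only [hEX, tsum_mul_left]

lemma ProbabilityTheory.iIndepFun.integral_add_sqrt_tsum_rpow_mem_Icc {Ω : Type*}
    [MeasurableSpace Ω] {P : Measure Ω} [IsProbabilityMeasure P] {X : ℕ → Ω → ℝ} {c : ℕ → ℝ}
    (hind : iIndepFun X P) (hX : ∀ i, Measurable (X i)) (hX0 : ∀ i ω, 0 ≤ X i ω)
    (hXc : ∀ i ω, X i ω ≤ c i) (hc : Summable c) {a p : ℝ} (ha : 0 ≤ a)
    (hXa : ∀ i ω, X i ω ≤ a ^ 2) (hp : 2 ≤ p) :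
    (∫ ω, (p * a + Real.sqrt p * Real.sqrt (∑' i, X i ω)) ^ p ∂P) ^ (1 / p) ∈ Set.Icc
      ((1 / 2) * (p * a + Real.sqrt p * Real.sqrt (∫ ω, ∑' i, X i ω ∂P)))
      (6 * (p * a + Real.sqrt p * Real.sqrt (∫ ω, ∑' i, X i ω ∂P))) := by
  have hmem := tsum_mem_Icc_of_le_summable hX0 hXc hc
  have hmeas := measurable_tsum_of_le_summable hX hX0 hXc hc
  have hμ : 0 ≤ ∫ ω, ∑' i, X i ω ∂P := integral_nonneg fun ω => (hmem ω).1
  have hu : 0 ≤ p * a := mul_nonneg (by linarith) ha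
  refine ⟨half_add_le_integral_add_sqrt_rpow hmeas hmem hu hp, ?_⟩
  have hmom := hind.integral_tsum_rpow_le hX hX0 hXc hc hXa (q := p / 2) (by linarith)
  refine (integral_add_sqrt_rpow_le hmeas hmem hu hp (by positivity) hmom).trans ?_
  linarith [sqrt_mul_sqrt_exp_one_mul_le (by linarith : 0 ≤ p) hμ ha,
    mul_nonneg (Real.sqrt_nonneg p) (Real.sqrt_nonneg (∫ ω, ∑' i, X i ω ∂P))]

theorem stmt3 :
    ∃ C₁ C₂ : ℝ, 0 < C₁ ∧ 0 < C₂ ∧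
    ∀ (Ω : Type) (_mΩ : MeasurableSpace Ω) (P : Measure Ω),
      IsProbabilityMeasure P →
      ∀ (α : ℝ) (κ θ : ℕ → Ω → ℝ) (a : ℕ → ℝ),
        0 ≤ α → α < 1 →
        (∀ n, Measurable (κ n)) →
        (∀ n, Measurable (θ n)) →
        iIndepFun (Sum.elim κ θ) P →
        (∀ n ω, κ n ω = 0 ∨ κ n ω = 1) →
        (∀ n, P {ω | κ n ω = 0} = ENNReal.ofReal α) →
        (∀ n t, 0 ≤ t → P {ω | t < θ n ω} = ENNReal.ofReal (Real.exp (-t))) →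
        (∀ n, 0 ≤ a n) → Antitone a →
        Summable (fun n => (a n) ^ 2) →
        ∀ (n : ℕ) (p : ℝ), 2 ≤ p →
          C₁ * (p * a n + Real.sqrt p * Real.sqrt ((1 - α) * ∑' k, (a (n + 1 + k)) ^ 2)) ≤ (∫ ω, (p * a n + Real.sqrt p * Real.sqrt (∑' k, κ (n + 1 + k) ω * (a (n + 1 + k)) ^ 2)) ^ p ∂P) ^ (1 / p) ∧
          (∫ ω, (p * a n + Real.sqrt p * Real.sqrt (∑' k, κ (n + 1 + k) ω * (a (n + 1 + k)) ^ 2)) ^ p ∂P) ^ (1 / p) ≤ C₂ * (p * a n + Real.sqrt p * Real.sqrt ((1 - α) * ∑' k, (a (n + 1 + k)) ^ 2)) := by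
  refine ⟨1 / 2, 6, by norm_num, by norm_num, ?_⟩
  intro Ω _ P _ α κ θ a hα0 _ hκ _ hind h01 hκP _ ha0 ha hsum n p hp
  set X : ℕ → Ω → ℝ := fun k ω => κ (n + 1 + k) ω * a (n + 1 + k) ^ 2
  have hc : Summable fun k => a (n + 1 + k) ^ 2 :=
    hsum.comp_injective (add_right_injective (n + 1))
  have hmem : ∀ k ω, X k ω ∈ Set.Icc 0 (a (n + 1 + k) ^ 2) := fun k ω =>
    mul_mem_Icc_of_eq_zero_or_eq_one (h01 _ ω) (sq_nonneg _)
  have hXa : ∀ k ω, X k ω ≤ a n ^ 2 := fun k ω =>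
    (hmem k ω).2.trans (pow_le_pow_left₀ (ha0 _) (ha (by omega)) 2)
  have hXind : iIndepFun X P :=
    (hind.precomp (g := fun k => Sum.inl (n + 1 + k)) fun i j h => by
      simpa using Sum.inl_injective h).comp _ fun k => measurable_id.mul_const _
  have hmean : ∫ ω, ∑' k, X k ω ∂P = (1 - α) * ∑' k, a (n + 1 + k) ^ 2 :=
    integral_tsum_mul_of_mem_zero_one (fun k => hκ _) (fun k => h01 _) (fun k => hκP _) hα0
      (fun k => sq_nonneg _) hc
  have hbounds := hXind.integral_add_sqrt_tsum_rpow_mem_Icc (fun k => (hκ _).mul_const _)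
    (fun k ω => (hmem k ω).1) (fun k ω => (hmem k ω).2) hc (ha0 n) hXa hp
  rwa [hmean] at hbounds
end

section
/- There exists a universal constant C ∈ (0,∞) with the following property. Assume ∑_{k≥1} a_k² < ∞. Then for every n ≥ 1 and every real p ≥ 2, ( 𝔼 | ∑_{k>n} (κ_k − (1−α)) a_k² |^{p/2} )^{2/p} ≤ C ( p·a_n² + √p · ( α(1−α) ∑_{k>n} a_k⁴ )^{1/2} ), where the series ∑_{k>n} (κ_k − (1−α)) a_k² converges almost surely and in L². -/
/-!
Write `X_k = (κ_k - (1 - α)) a_k²`. These are independent, centred, bounded by `a_k² ≤ a_n²` and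
have variance `α(1 - α) a_k⁴`. From `eˣ ≤ 1 + x + x²` for `|x| ≤ 1` one gets, for every partial sum
`S` of the tail, the Bernstein-type bound `𝔼 e^{tS} ≤ e^{t²σ²}` whenever `|t| a_n² ≤ 1`, where `σ²` is
the total variance. The elementary inequality `|s|^q ≤ (q/λ)^q e^{-q} (e^{λs} + e^{-λs})` at
`λ = q / (q a_n² + √q σ)` turns this into `𝔼|S|^q ≤ (2 (q a_n² + √q σ))^q`, which passes to the series
by dominated convergence since all partial sums are bounded by `∑ a_k²`. Take `q = p/2`, `C = 2`.
-/

open MeasureTheory ProbabilityTheory Filter Topology Real Finset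

lemma abs_rpow_le_mul_exp_add_exp {q l : ℝ} (hq : 0 < q) (hl : 0 < l) (s : ℝ) :
    |s| ^ q ≤ (q / l) ^ q * exp (-q) * (exp (l * s) + exp (-(l * s))) := by
  have hy : 0 ≤ l * |s| / q := by positivity
  have hexp : exp (l * |s|) ≤ exp (l * s) + exp (-(l * s)) := by
    rcases abs_cases s with ⟨h, _⟩ | ⟨h, _⟩ <;> rw [h]
    · linarith [exp_pos (-(l * s))]
    · rw [mul_neg]; linarith [exp_pos (l * s)]
  calc |s| ^ q = (q / l) ^ q * (l * |s| / q) ^ q := by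
        rw [← mul_rpow (by positivity) hy]; congr 1; field_simp
    _ ≤ (q / l) ^ q * exp (l * |s| / q - 1) ^ q := by
        gcongr; linarith [add_one_le_exp (l * |s| / q - 1)]
    _ = (q / l) ^ q * exp (-q) * exp (l * |s|) := by
        rw [← exp_mul, mul_assoc, ← exp_add]; congr 2; field_simp; ring
    _ ≤ _ := by gcongr

lemma abs_sum_range_sub_tsum_le {f b : ℕ → ℝ} (hb : Summable b) (hfb : ∀ k, |f k| ≤ b k)
    (N : ℕ) : |∑ k ∈ range N, f k - ∑' k, f k| ≤ ∑' k, b (k + N) := by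
  rw [← (hb.of_norm_bounded hfb).sum_add_tsum_nat_add N, sub_add_cancel_left, abs_neg]
  exact tsum_of_norm_bounded (f := fun k => f (k + N)) ((summable_nat_add_iff N).2 hb).hasSum
    fun k => hfb (k + N)

variable {Ω : Type*} [MeasurableSpace Ω] {μ : Measure Ω}

lemma integral_abs_rpow_le_of_mgf_le {X : Ω → ℝ} {q c σ : ℝ} (hq : 1 ≤ q) (hc : 0 < c)
    (hσ : 0 ≤ σ) (hint : ∀ t, Integrable (fun ω => exp (t * X ω)) μ)
    (hmgf : ∀ t, |t| * c ≤ 1 → mgf X μ t ≤ exp (t ^ 2 * σ ^ 2)) :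
    ∫ ω, |X ω| ^ q ∂μ ≤ (2 * (q * c + √q * σ)) ^ q := by
  have hq0 : 0 < q := by linarith
  set B := q * c + √q * σ
  have hsσ : 0 ≤ √q * σ := by positivity
  have hqc : 0 < q * c := by positivity
  have hB : 0 < B := by positivity
  -- `B` dominates both `q c` and `√q σ`, so `l` keeps `l c ≤ 1` and `l² σ² ≤ q`.
  set l := q / B
  have hl : 0 < l := by positivity
  have hlc : |l| * c ≤ 1 := by
    rw [abs_of_pos hl, div_mul_eq_mul_div, div_le_one hB]; linarith
  have hlσ : l ^ 2 * σ ^ 2 ≤ q := by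
    have : q * σ ^ 2 ≤ B ^ 2 := by
      nlinarith [sq_sqrt hq0.le]
    rw [div_pow, div_mul_eq_mul_div, div_le_iff₀ (by positivity)]
    nlinarith
  have hmgf_neg : mgf X μ (-l) ≤ exp (l ^ 2 * σ ^ 2) := by
    simpa using hmgf (-l) (by rwa [abs_neg])
  have hint_neg : Integrable (fun ω => exp (-(l * X ω))) μ := by simpa using hint (-l)
  calc ∫ ω, |X ω| ^ q ∂μ
      ≤ ∫ ω, (q / l) ^ q * exp (-q) * (exp (l * X ω) + exp (-(l * X ω))) ∂μ :=
        integral_mono_of_nonneg (ae_of_all _ fun ω => by positivity)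
          (((hint l).add hint_neg).const_mul _)
          (ae_of_all _ fun ω => abs_rpow_le_mul_exp_add_exp hq0 hl (X ω))
    _ = B ^ q * (exp (-q) * (mgf X μ l + mgf X μ (-l))) := by
        rw [integral_const_mul, integral_add (hint l) hint_neg, div_div_cancel₀ hq0.ne']
        simp [mgf, mul_assoc]
    _ ≤ B ^ q * (exp (-q) * (2 * exp (l ^ 2 * σ ^ 2))) := by
        gcongr; linarith [hmgf l hlc]
    _ ≤ 2 ^ q * B ^ q := by
        have h1 : exp (-q) * exp (l ^ 2 * σ ^ 2) ≤ 1 := by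
          rw [← exp_add, exp_le_one_iff]; linarith
        have h2 : (2 : ℝ) ≤ 2 ^ q := by
          simpa using rpow_le_rpow_of_exponent_le (by norm_num : (1 : ℝ) ≤ 2) hq
        have h3 : 0 ≤ B ^ q := by positivity
        nlinarith
    _ = (2 * B) ^ q := (mul_rpow (by norm_num) hB.le).symm

variable [IsProbabilityMeasure μ]

lemma mgf_le_exp_sq_mul_integral_sq {X : Ω → ℝ} {c t : ℝ} (hX : AEStronglyMeasurable X μ)
    (hbd : ∀ ω, |X ω| ≤ c) (hmean : ∫ ω, X ω ∂μ = 0) (ht : |t| * c ≤ 1) :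
    mgf X μ t ≤ exp (t ^ 2 * ∫ ω, X ω ^ 2 ∂μ) := by
  have hXi : Integrable X μ := .of_bound hX c (ae_of_all _ hbd)
  have hX2i : Integrable (fun ω => X ω ^ 2) μ :=
    .of_bound (hX.pow 2) (c ^ 2) (ae_of_all _ fun ω => by
      simpa [Real.norm_eq_abs, sq_abs] using pow_le_pow_left₀ (abs_nonneg _) (hbd ω) 2)
  have hpt : ∀ ω, exp (t * X ω) ≤ 1 + t * X ω + t ^ 2 * X ω ^ 2 := fun ω => by
    have h : |t * X ω| ≤ 1 :=
      (abs_mul t (X ω)).trans_le ((mul_le_mul_of_nonneg_left (hbd ω) (abs_nonneg t)).trans ht)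
    linarith [(abs_le.1 (abs_exp_sub_one_sub_id_le h)).2, mul_pow t (X ω) 2]
  calc mgf X μ t ≤ ∫ ω, (1 + t * X ω + t ^ 2 * X ω ^ 2) ∂μ :=
        integral_mono_of_nonneg (ae_of_all _ fun ω => (exp_pos _).le)
          (((integrable_const 1).add (hXi.const_mul t)).add (hX2i.const_mul _)) (ae_of_all _ hpt)
    _ = 1 + t ^ 2 * ∫ ω, X ω ^ 2 ∂μ := by
        have h1 : Integrable (fun ω => 1 + t * X ω) μ := (integrable_const 1).add (hXi.const_mul t)
        rw [integral_add h1 (hX2i.const_mul _),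
          integral_add (integrable_const 1) (hXi.const_mul t), integral_const_mul,
          integral_const_mul, hmean]
        simp
    _ ≤ _ := by linarith [add_one_le_exp (t ^ 2 * ∫ ω, X ω ^ 2 ∂μ)]

lemma mgf_sum_range_le {X : ℕ → Ω → ℝ} {c t : ℝ} (hXm : ∀ k, Measurable (X k))
    (hindep : iIndepFun X μ) (hbd : ∀ k ω, |X k ω| ≤ c) (hmean : ∀ k, ∫ ω, X k ω ∂μ = 0)
    (hvar : Summable fun k => ∫ ω, X k ω ^ 2 ∂μ) (ht : |t| * c ≤ 1) (N : ℕ) :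
    mgf (∑ k ∈ range N, X k) μ t ≤ exp (t ^ 2 * ∑' k, ∫ ω, X k ω ^ 2 ∂μ) := by
  rw [hindep.mgf_sum hXm]
  calc ∏ k ∈ range N, mgf (X k) μ t ≤ ∏ k ∈ range N, exp (t ^ 2 * ∫ ω, X k ω ^ 2 ∂μ) :=
        prod_le_prod (fun k _ => mgf_nonneg) fun k _ =>
          mgf_le_exp_sq_mul_integral_sq (hXm k).aestronglyMeasurable (hbd k) (hmean k) ht
    _ = exp (t ^ 2 * ∑ k ∈ range N, ∫ ω, X k ω ^ 2 ∂μ) := by rw [← exp_sum, mul_sum]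
    _ ≤ _ := by
        gcongr
        exact hvar.sum_le_tsum _ fun k _ => integral_nonneg fun ω => sq_nonneg _

lemma integral_sq_le_mul_of_abs_le {X : Ω → ℝ} {b c : ℝ} (hb : ∀ ω, |X ω| ≤ b)
    (hc : ∀ ω, |X ω| ≤ c) : ∫ ω, X ω ^ 2 ∂μ ≤ c * b := by
  calc ∫ ω, X ω ^ 2 ∂μ ≤ ∫ _, c * b ∂μ :=
        integral_mono_of_nonneg (ae_of_all _ fun ω => sq_nonneg _) (integrable_const _)
          (ae_of_all _ fun ω => show X ω ^ 2 ≤ c * b by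
            rw [← sq_abs, sq]
            exact mul_le_mul (hc ω) (hb ω) (abs_nonneg _) ((abs_nonneg _).trans (hc ω)))
    _ = c * b := by simp

lemma tendsto_integral_sq_sum_range_sub_tsum {X : ℕ → Ω → ℝ} {b : ℕ → ℝ} (hb : Summable b)
    (hbd : ∀ k ω, |X k ω| ≤ b k) :
    Tendsto (fun N => ∫ ω, (∑ k ∈ range N, X k ω - ∑' k, X k ω) ^ 2 ∂μ) atTop (𝓝 0) := by
  have htail : Tendsto (fun N => (∑' k, b (k + N)) ^ 2) atTop (𝓝 0) := by
    simpa using (tendsto_sum_nat_add b).pow 2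
  refine squeeze_zero (fun N => integral_nonneg fun ω => sq_nonneg _) (fun N => ?_) htail
  calc _ ≤ ∫ _, (∑' k, b (k + N)) ^ 2 ∂μ :=
        integral_mono_of_nonneg (ae_of_all _ fun ω => sq_nonneg _) (integrable_const _)
          (ae_of_all _ fun ω => sq_le_sq' (abs_le.1 (abs_sum_range_sub_tsum_le hb (hbd · ω) N)).1
            (abs_le.1 (abs_sum_range_sub_tsum_le hb (hbd · ω) N)).2)
    _ = _ := by simp

lemma integral_comp_of_eq_zero_or_eq_one {κ : Ω → ℝ} (hκ : Measurable κ)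
    (h01 : ∀ ω, κ ω = 0 ∨ κ ω = 1) {α : ℝ} (hα : 0 ≤ α)
    (hκ0 : μ {ω | κ ω = 0} = ENNReal.ofReal α) (g : ℝ → ℝ) :
    ∫ ω, g (κ ω) ∂μ = α * g 0 + (1 - α) * g 1 := by
  have hs : MeasurableSet {ω | κ ω = 0} := hκ (measurableSet_singleton 0)
  have hg : (fun ω => g (κ ω)) = fun ω => {ω | κ ω = 0}.indicator (fun _ => g 0 - g 1) ω + g 1 := by
    ext ω
    rcases h01 ω with h | h <;> simp [h]
  rw [hg, integral_add ((integrable_const _).indicator hs) (integrable_const _),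
    integral_indicator_const _ hs, integral_const]
  simp [measureReal_def, hκ0, ENNReal.toReal_ofReal hα]
  ring

theorem integral_abs_tsum_rpow_le {X : ℕ → Ω → ℝ} {b : ℕ → ℝ} {q c : ℝ}
    (hXm : ∀ k, Measurable (X k)) (hindep : iIndepFun X μ) (hbd : ∀ k ω, |X k ω| ≤ b k)
    (hb : Summable b) (hbc : ∀ k, b k ≤ c) (hmean : ∀ k, ∫ ω, X k ω ∂μ = 0) (hq : 1 ≤ q) :
    ∫ ω, |∑' k, X k ω| ^ q ∂μ ≤ (2 * (q * c + √q * √(∑' k, ∫ ω, X k ω ^ 2 ∂μ))) ^ q := by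
  have hq0 : 0 < q := by linarith
  obtain ⟨ω₀⟩ := nonempty_of_isProbabilityMeasure μ
  have hb0 : ∀ k, 0 ≤ b k := fun k => (abs_nonneg _).trans (hbd k ω₀)
  rcases ((hb0 0).trans (hbc 0)).eq_or_lt with rfl | hc
  · have hX0 : ∀ k ω, X k ω = 0 := fun k ω => abs_nonpos_iff.1 ((hbd k ω).trans (hbc k))
    simp only [hX0, tsum_zero, abs_zero, zero_rpow hq0.ne', integral_zero]
    positivity
  set S : ℕ → Ω → ℝ := fun N ω => ∑ k ∈ range N, X k ω
  set M := ∑' k, b k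
  have hSm : ∀ N, Measurable (S N) := fun N => Finset.measurable_sum _ fun k _ => hXm k
  have hSbd : ∀ N ω, |S N ω| ≤ M := fun N ω =>
    (abs_sum_le_sum_abs _ _).trans ((sum_le_sum fun k _ => hbd k ω).trans
      (hb.sum_le_tsum _ fun k _ => hb0 k))
  have hvar : Summable fun k => ∫ ω, X k ω ^ 2 ∂μ :=
    (hb.mul_left c).of_nonneg_of_le (fun k => integral_nonneg fun ω => sq_nonneg _) fun k =>
      integral_sq_le_mul_of_abs_le (hbd k) fun ω => (hbd k ω).trans (hbc k)
  have hmomS : ∀ N, ∫ ω, |S N ω| ^ q ∂μ ≤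
      (2 * (q * c + √q * √(∑' k, ∫ ω, X k ω ^ 2 ∂μ))) ^ q := fun N => by
    refine integral_abs_rpow_le_of_mgf_le hq hc (sqrt_nonneg _) (fun t => ?_) fun t ht => ?_
    · exact integrable_exp_mul_of_mem_Icc (hSm N).aemeasurable
        (ae_of_all _ fun ω => abs_le.1 (hSbd N ω))
    · rw [sq_sqrt (tsum_nonneg fun k => integral_nonneg fun ω => sq_nonneg _)]
      have := mgf_sum_range_le hXm hindep (fun k ω => (hbd k ω).trans (hbc k)) hmean hvar ht N
      simpa [S, mgf, Finset.sum_apply] using this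
  have hlim : Tendsto (fun N => ∫ ω, |S N ω| ^ q ∂μ) atTop
      (𝓝 (∫ ω, |∑' k, X k ω| ^ q ∂μ)) := by
    refine tendsto_integral_of_dominated_convergence (fun _ => M ^ q)
      (fun N => ((hSm N).abs.pow_const q).aestronglyMeasurable) (integrable_const _)
      (fun N => ae_of_all _ fun ω => ?_) (ae_of_all _ fun ω => ?_)
    · rw [norm_of_nonneg (by positivity)]
      exact rpow_le_rpow (abs_nonneg _) (hSbd N ω) hq0.le
    · exact ((hb.of_norm_bounded (hbd · ω)).hasSum.tendsto_sum_nat.abs).rpow_const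
        (Or.inr hq0.le)
  exact le_of_tendsto' hlim hmomS

theorem stmt4 :
    ∃ C : ℝ, 0 < C ∧
    ∀ (Ω : Type) (_mΩ : MeasurableSpace Ω) (P : Measure Ω),
      IsProbabilityMeasure P →
      ∀ (α : ℝ) (κ θ : ℕ → Ω → ℝ) (a : ℕ → ℝ),
        0 ≤ α → α < 1 →
        (∀ n, Measurable (κ n)) →
        (∀ n, Measurable (θ n)) →
        iIndepFun (Sum.elim κ θ) P →
        (∀ n ω, κ n ω = 0 ∨ κ n ω = 1) →
        (∀ n, P {ω | κ n ω = 0} = ENNReal.ofReal α) →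
        (∀ n t, 0 ≤ t → P {ω | t < θ n ω} = ENNReal.ofReal (Real.exp (-t))) →
        (∀ n, 0 ≤ a n) → Antitone a →
        Summable (fun n => (a n) ^ 2) →
        ∀ n : ℕ, ∃ Y : Ω → ℝ,
          (∀ᵐ ω ∂P, Tendsto (fun N => ∑ k ∈ Finset.range N, (κ (n + 1 + k) ω - (1 - α)) * (a (n + 1 + k)) ^ 2) atTop (𝓝 (Y ω))) ∧
          Tendsto (fun N => ∫ ω, (∑ k ∈ Finset.range N, (κ (n + 1 + k) ω - (1 - α)) * (a (n + 1 + k)) ^ 2 - Y ω) ^ 2 ∂P) atTop (𝓝 (0 : ℝ)) ∧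
          ∀ p : ℝ, 2 ≤ p →
            (∫ ω, |Y ω| ^ (p / 2) ∂P) ^ (2 / p)
              ≤ C * (p * (a n) ^ 2 + Real.sqrt p * Real.sqrt (α * (1 - α) * ∑' k, (a (n + 1 + k)) ^ 4)) := by
  refine ⟨2, two_pos, fun Ω _ P _ α κ θ a hα0 hα1 hκm _ hindep h01 hκ0 _ ha0 ha hsum n => ?_⟩
  set X : ℕ → Ω → ℝ := fun k ω => (κ (n + 1 + k) ω - (1 - α)) * a (n + 1 + k) ^ 2
  have hb : Summable fun k => a (n + 1 + k) ^ 2 := by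
    simpa [add_comm] using (summable_nat_add_iff (n + 1)).2 hsum
  have hbd : ∀ k ω, |X k ω| ≤ a (n + 1 + k) ^ 2 := fun k ω => by
    rw [abs_mul, abs_of_nonneg (sq_nonneg (a (n + 1 + k)))]
    refine mul_le_of_le_one_left (sq_nonneg _) ?_
    rcases h01 (n + 1 + k) ω with h | h <;> rw [h, abs_le] <;> constructor <;> linarith
  have hXindep : iIndepFun X P :=
    (hindep.precomp (g := fun k => .inl (n + 1 + k)) fun i j h => by simpa using h).comp _
      fun k => (measurable_id.sub_const _).mul_const _
  have hmean : ∀ k, ∫ ω, X k ω ∂P = 0 := fun k =>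
    (integral_comp_of_eq_zero_or_eq_one (hκm _) (h01 _) hα0 (hκ0 _)
      fun y => (y - (1 - α)) * a (n + 1 + k) ^ 2).trans (by ring)
  have hvar : ∀ k, ∫ ω, X k ω ^ 2 ∂P = α * (1 - α) * a (n + 1 + k) ^ 4 := fun k =>
    (integral_comp_of_eq_zero_or_eq_one (hκm _) (h01 _) hα0 (hκ0 _)
      fun y => ((y - (1 - α)) * a (n + 1 + k) ^ 2) ^ 2).trans (by ring)
  refine ⟨fun ω => ∑' k, X k ω,
    ae_of_all _ fun ω => (hb.of_norm_bounded (hbd · ω)).hasSum.tendsto_sum_nat,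
    tendsto_integral_sq_sum_range_sub_tsum hb hbd, fun p hp => ?_⟩
  have hmom : ∫ ω, |∑' k, X k ω| ^ (p / 2) ∂P ≤
      (2 * (p / 2 * a n ^ 2 + √(p / 2) * √(∑' k, ∫ ω, X k ω ^ 2 ∂P))) ^ (p / 2) :=
    integral_abs_tsum_rpow_le (fun k => ((hκm _).sub_const _).mul_const _) hXindep hbd hb
      (fun k => pow_le_pow_left₀ (ha0 _) (ha (by omega)) 2) hmean (by linarith)
  rw [tsum_congr hvar, tsum_mul_left] at hmom
  calc _ ≤ 2 * (p / 2 * a n ^ 2 + √(p / 2) * √(α * (1 - α) * ∑' k, a (n + 1 + k) ^ 4)) := by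
        rw [← inv_div p 2, rpow_inv_le_iff_of_pos (integral_nonneg fun ω => by positivity)
          (by positivity) (by positivity)]
        exact hmom
    _ ≤ _ := by gcongr <;> linarith
end

section
/- There exist universal constants β ∈ [1,∞) and γ ∈ (0,∞) with the following property. Assume ∑_{n≥1} a_n < ∞ and a_1 > 0, and set σ = a_1 θ_1 + ∑_{n≥2} a_n κ_n θ_n. Then for every real p ≥ 2, ℙ( σ ≥ γ · ( p·a_1 + (1−α) ∑_{n≥2} a_n ) ) ≥ (1/2) e^{−β p}. -/
/-!
Take β = 3 and γ = 1/12. The event θ₀ > 3p has probability e^{-3p} and on it the first term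
alone is at least 3p·a₀, which suffices when (1 - α)·∑_{n≥1} a_n ≤ 50 a₀. Otherwise choose N with
∑_{n=1}^N a_n at least half of the tail. The events {κ_n = 1, θ_n > 1} are independent with
probability q = (1 - α)/e, so the weighted count X = ∑_{n=1}^N a_n 1{κ_n = 1, θ_n > 1} has mean
q ∑_{n≤N} a_n and variance at most a₀ times its mean; by Chebyshev it exceeds half its mean with
probability at least 1/2. Since X is independent of θ₀ and bounded by the series, the two
estimates multiply. The series itself converges almost surely because 𝔼 θ_n = 1; this matters
because a non-summable `tsum` is `0`.
-/

open MeasureTheory ProbabilityTheory Filter Topology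

lemma measurable_iSup_comap {Ω ι β : Type*} [mβ : MeasurableSpace β] {f : ι → Ω → β} {S : Set ι}
    {i : ι} (hi : i ∈ S) : Measurable[⨆ j ∈ S, mβ.comap (f j)] (f i) :=
  (comap_measurable (f i)).mono (le_iSup₂ (f := fun j _ => mβ.comap (f j)) i hi) le_rfl

section General

variable {Ω : Type*} [MeasurableSpace Ω] {μ : Measure Ω}

lemma ProbabilityTheory.iIndepFun.indepFun_of_measurable_iSup {ι β γ γ' : Type*}
    [MeasurableSpace β] [MeasurableSpace γ] [MeasurableSpace γ'] {f : ι → Ω → β}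
    (hf : ∀ i, Measurable (f i)) (h : iIndepFun f μ) {S T : Set ι} (hST : Disjoint S T)
    {X : Ω → γ} {Y : Ω → γ'}
    (hX : Measurable[⨆ i ∈ S, MeasurableSpace.comap (f i) ‹_›] X)
    (hY : Measurable[⨆ i ∈ T, MeasurableSpace.comap (f i) ‹_›] Y) :
    IndepFun X Y μ :=
  indep_of_indep_of_le_right
    (indep_of_indep_of_le_left
      (indep_iSup_of_disjoint (fun i => (hf i).comap_le) h.iIndep hST) hX.comap_le)
    hY.comap_le

lemma ae_summable_of_tsum_lintegral_ne_top {ι : Type*} [Countable ι] {f : ι → Ω → ℝ}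
    (hf : ∀ i, AEMeasurable (f i) μ) (hf_nonneg : ∀ᵐ ω ∂μ, ∀ i, 0 ≤ f i ω)
    (h : ∑' i, ∫⁻ ω, ENNReal.ofReal (f i ω) ∂μ ≠ ⊤) :
    ∀ᵐ ω ∂μ, Summable fun i => f i ω := by
  rw [← lintegral_tsum fun i => (hf i).ennreal_ofReal] at h
  filter_upwards [ae_lt_top' (AEMeasurable.tsum fun i => (hf i).ennreal_ofReal) h,
    hf_nonneg] with ω hω hω_nonneg
  exact (ENNReal.summable_toReal hω.ne).congr fun i => ENNReal.toReal_ofReal (hω_nonneg i)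

variable [IsProbabilityMeasure μ]

lemma ae_pos_of_measure_lt_eq_exp {X : Ω → ℝ} (hX : Measurable X)
    (htail : ∀ t, 0 ≤ t → μ {ω | t < X ω} = ENNReal.ofReal (Real.exp (-t))) :
    ∀ᵐ ω ∂μ, 0 < X ω := by
  rw [ae_iff_measure_eq (measurableSet_lt measurable_const hX).nullMeasurableSet,
    htail 0 le_rfl]
  simp

lemma lintegral_ofReal_eq_one_of_measure_lt_eq_exp {X : Ω → ℝ} (hX : Measurable X)
    (htail : ∀ t, 0 ≤ t → μ {ω | t < X ω} = ENNReal.ofReal (Real.exp (-t))) :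
    ∫⁻ ω, ENNReal.ofReal (X ω) ∂μ = 1 := by
  have hpos := ae_pos_of_measure_lt_eq_exp hX htail
  rw [lintegral_eq_lintegral_meas_lt μ (hpos.mono fun _ h => h.le) hX.aemeasurable,
    setLIntegral_congr_fun measurableSet_Ioi fun t (ht : 0 < t) => htail t ht.le,
    ← ofReal_integral_eq_lintegral_ofReal (integrableOn_exp_neg_Ioi 0)
      (ae_of_all _ fun _ => (Real.exp_pos _).le),
    integral_exp_neg_Ioi_zero, ENNReal.ofReal_one]

lemma measure_setOf_eq_one_of_eq_zero_or_eq_one {κ : Ω → ℝ} (hκ : Measurable κ)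
    (hκ01 : ∀ ω, κ ω = 0 ∨ κ ω = 1) {α : ℝ} (hα : 0 ≤ α)
    (hκ0 : μ {ω | κ ω = 0} = ENNReal.ofReal α) :
    μ {ω | κ ω = 1} = ENNReal.ofReal (1 - α) := by
  have hcompl : {ω | κ ω = 1} = {ω | κ ω = 0}ᶜ := by
    ext ω
    rcases hκ01 ω with h | h <;> simp [h]
  rw [hcompl, prob_compl_eq_one_sub (measurableSet_eq_fun hκ measurable_const), hκ0,
    ← ENNReal.ofReal_one, ← ENNReal.ofReal_sub 1 hα]

lemma memLp_indicator_one {s : Set Ω} (hs : MeasurableSet s) (p : ENNReal) :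
    MemLp (s.indicator (1 : Ω → ℝ)) p μ :=
  (memLp_const 1).indicator hs

lemma variance_indicator_one {s : Set Ω} (hs : MeasurableSet s) :
    variance (s.indicator 1) μ = μ.real s - μ.real s ^ 2 := by
  have hsq : s.indicator (1 : Ω → ℝ) ^ 2 = s.indicator 1 := by
    ext ω
    by_cases h : ω ∈ s <;> simp [h]
  rw [variance_eq_sub (memLp_indicator_one hs 2), hsq, integral_indicator_one hs]

section WeightedIndicators

variable {ι : Type*} {s : Finset ι} {E : ι → Set Ω} {q : ℝ} {w : ι → ℝ}

lemma integral_sum_smul_indicator_one (hE : ∀ i ∈ s, MeasurableSet (E i))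
    (hq : ∀ i ∈ s, μ.real (E i) = q) :
    μ[∑ i ∈ s, w i • (E i).indicator (1 : Ω → ℝ)] = q * ∑ i ∈ s, w i := by
  simp only [Finset.sum_apply]
  rw [integral_finsetSum s fun i hi => ((memLp_indicator_one (hE i hi) 1).integrable le_rfl).smul _,
    Finset.mul_sum]
  refine Finset.sum_congr rfl fun i hi => ?_
  simp only [Pi.smul_apply]
  rw [integral_smul, integral_indicator_one (hE i hi), hq i hi, smul_eq_mul, mul_comm]

lemma variance_sum_smul_indicator_one_le (hE : ∀ i ∈ s, MeasurableSet (E i))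
    (hq : ∀ i ∈ s, μ.real (E i) = q) (hq0 : 0 ≤ q)
    (hind : (s : Set ι).Pairwise fun i j =>
      IndepFun (w i • (E i).indicator (1 : Ω → ℝ)) (w j • (E j).indicator (1 : Ω → ℝ)) μ)
    {M : ℝ} (hw : ∀ i ∈ s, 0 ≤ w i ∧ w i ≤ M) :
    variance (∑ i ∈ s, w i • (E i).indicator (1 : Ω → ℝ)) μ ≤ M * (q * ∑ i ∈ s, w i) := by
  rw [IndepFun.variance_sum (fun i hi => (memLp_indicator_one (hE i hi) 2).const_smul (w i)) hind,
    Finset.mul_sum, Finset.mul_sum]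
  refine Finset.sum_le_sum fun i hi => ?_
  rw [variance_smul, variance_indicator_one (hE i hi), hq i hi]
  obtain ⟨hw0, hwM⟩ := hw i hi
  nlinarith [sq_nonneg q, mul_le_mul_of_nonneg_left hwM hw0]

lemma one_sub_le_measure_half_lt_sum_mul_indicator (hE : ∀ i ∈ s, MeasurableSet (E i))
    (hq : ∀ i ∈ s, μ.real (E i) = q)
    (hind : (s : Set ι).Pairwise fun i j =>
      IndepFun (w i • (E i).indicator (1 : Ω → ℝ)) (w j • (E j).indicator (1 : Ω → ℝ)) μ)
    {M : ℝ} (hw : ∀ i ∈ s, 0 ≤ w i ∧ w i ≤ M) (hpos : 0 < q * ∑ i ∈ s, w i) :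
    1 - ENNReal.ofReal (4 * M / (q * ∑ i ∈ s, w i))
      ≤ μ {ω | q * (∑ i ∈ s, w i) / 2 < ∑ i ∈ s, w i * (E i).indicator 1 ω} := by
  set X := ∑ i ∈ s, w i • (E i).indicator (1 : Ω → ℝ)
  set W := ∑ i ∈ s, w i
  have hq0 : 0 ≤ q := by
    have : 0 ≤ W := Finset.sum_nonneg fun i hi => (hw i hi).1
    nlinarith
  have hX_apply : ∀ ω, X ω = ∑ i ∈ s, w i * (E i).indicator 1 ω := fun ω => by
    simp only [X, Finset.sum_apply, Pi.smul_apply, smul_eq_mul]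
  have hvar := variance_sum_smul_indicator_one_le hE hq hq0 hind hw
  have hmean : μ[X] = q * W := integral_sum_smul_indicator_one hE hq
  have hmeas : Measurable X := by
    rw [show X = _ from funext hX_apply]
    exact Finset.measurable_sum _ fun i hi => (measurable_const.indicator (hE i hi)).const_mul _
  have hcheb : μ {ω | X ω ≤ q * W / 2} ≤ ENNReal.ofReal (4 * M / (q * W)) := by
    refine (measure_mono fun ω (hω : X ω ≤ _) => ?_).trans <| (meas_ge_le_variance_div_sq
      (memLp_finsetSum' s fun i hi => (memLp_indicator_one (hE i hi) 2).const_smul (w i))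
      (half_pos hpos)).trans <| ENNReal.ofReal_le_ofReal ?_
    · show q * W / 2 ≤ |X ω - μ[X]|
      rw [hmean, abs_sub_comm, abs_of_nonneg (by linarith)]
      linarith
    · rw [div_le_div_iff₀ (by positivity) hpos]
      nlinarith
  calc 1 - ENNReal.ofReal (4 * M / (q * W))
      ≤ 1 - μ {ω | X ω ≤ q * W / 2} := tsub_le_tsub_left hcheb 1
    _ = μ {ω | q * W / 2 < X ω} := by
      rw [← prob_compl_eq_one_sub (measurableSet_le hmeas measurable_const)]
      simp only [Set.compl_ofPred, not_le]
    _ = _ := by simp only [hX_apply]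

end WeightedIndicators

end General

section Model

variable {Ω : Type*} {κ θ : ℕ → Ω → ℝ}

def bigTerm (κ θ : ℕ → Ω → ℝ) (n : ℕ) : Set Ω := κ n ⁻¹' {1} ∩ θ n ⁻¹' Set.Ioi 1

lemma measurableSet_bigTerm_iSup {n : ℕ} {S : Set (ℕ ⊕ ℕ)} (hκ : Sum.inl n ∈ S)
    (hθ : Sum.inr n ∈ S) :
    MeasurableSet[⨆ i ∈ S, MeasurableSpace.comap (Sum.elim κ θ i) Real.measurableSpace]
      (bigTerm κ θ n) :=
  (measurable_iSup_comap (f := Sum.elim κ θ) hκ (measurableSet_singleton 1)).inter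
    (measurable_iSup_comap (f := Sum.elim κ θ) hθ measurableSet_Ioi)

lemma indicator_bigTerm_le_mul {n : ℕ} {ω : Ω} (hκ01 : κ n ω = 0 ∨ κ n ω = 1)
    (hθ : 0 ≤ θ n ω) : (bigTerm κ θ n).indicator (1 : Ω → ℝ) ω ≤ κ n ω * θ n ω := by
  by_cases h : ω ∈ bigTerm κ θ n
  · rw [Set.indicator_of_mem h]
    obtain ⟨h1 : κ n ω = 1, h2 : 1 < θ n ω⟩ := h
    simpa [h1] using h2.le
  · rw [Set.indicator_of_notMem h]
    rcases hκ01 with h0 | h1 <;> simp [*]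

lemma sum_mul_indicator_bigTerm_le_tsum {a : ℕ → ℝ} (ha : ∀ n, 0 ≤ a n) {ω : Ω}
    (hκ01 : ∀ n, κ n ω = 0 ∨ κ n ω = 1) (hθ : ∀ n, 0 ≤ θ n ω)
    (hsum : Summable fun n => a (n + 1) * κ (n + 1) ω * θ (n + 1) ω) (N : ℕ) :
    ∑ i ∈ Finset.range N, a (i + 1) * (bigTerm κ θ (i + 1)).indicator 1 ω
      ≤ ∑' n, a (n + 1) * κ (n + 1) ω * θ (n + 1) ω := by
  have hκ_nonneg : ∀ n, 0 ≤ κ n ω := fun n => by rcases hκ01 n with h | h <;> simp [h]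
  have hterm_nonneg : ∀ n, 0 ≤ a (n + 1) * κ (n + 1) ω * θ (n + 1) ω := fun n =>
    mul_nonneg (mul_nonneg (ha _) (hκ_nonneg _)) (hθ _)
  refine (Finset.sum_le_sum fun i _ => ?_).trans
    (hsum.sum_le_tsum _ fun i _ => hterm_nonneg i)
  rw [mul_assoc]
  exact mul_le_mul_of_nonneg_left (indicator_bigTerm_le_mul (hκ01 _) (hθ _)) (ha _)

variable [MeasurableSpace Ω] {P : Measure Ω}

lemma measurableSet_bigTerm (hκ : ∀ n, Measurable (κ n)) (hθ : ∀ n, Measurable (θ n)) (n : ℕ) :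
    MeasurableSet (bigTerm κ θ n) :=
  (hκ n (measurableSet_singleton 1)).inter (hθ n measurableSet_Ioi)

lemma indepFun_indicator_bigTerm (hκ : ∀ n, Measurable (κ n)) (hθ : ∀ n, Measurable (θ n))
    (hind : iIndepFun (Sum.elim κ θ) P) {m n : ℕ} (hmn : m ≠ n) (c d : ℝ) :
    IndepFun (c • (bigTerm κ θ m).indicator (1 : Ω → ℝ))
      (d • (bigTerm κ θ n).indicator (1 : Ω → ℝ)) P :=
  hind.indepFun_of_measurable_iSup (Sum.forall.2 ⟨hκ, hθ⟩)
    (S := {.inl m, .inr m}) (T := {.inl n, .inr n}) (by simp [hmn.symm])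
    ((measurable_const.indicator
      (measurableSet_bigTerm_iSup (κ := κ) (θ := θ) (by simp) (by simp))).const_smul c)
    ((measurable_const.indicator
      (measurableSet_bigTerm_iSup (κ := κ) (θ := θ) (by simp) (by simp))).const_smul d)

lemma indepFun_zero_sum_indicator_bigTerm (hκ : ∀ n, Measurable (κ n))
    (hθ : ∀ n, Measurable (θ n)) (hind : iIndepFun (Sum.elim κ θ) P) (a : ℕ → ℝ) (N : ℕ) :
    IndepFun (θ 0)
      (fun ω => ∑ i ∈ Finset.range N, a (i + 1) * (bigTerm κ θ (i + 1)).indicator 1 ω) P :=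
  hind.indepFun_of_measurable_iSup (Sum.forall.2 ⟨hκ, hθ⟩)
    (S := {.inr 0}) (T := {.inr 0}ᶜ) disjoint_compl_right
    (measurable_iSup_comap (f := Sum.elim κ θ) (i := .inr 0) (Set.mem_singleton _))
    (Finset.measurable_sum _ fun i _ => (measurable_const.indicator
      (measurableSet_bigTerm_iSup (κ := κ) (θ := θ) (by simp) (by simp))).const_mul _)

variable [IsProbabilityMeasure P]

lemma measureReal_bigTerm {α : ℝ} (hα0 : 0 ≤ α) (hα1 : α ≤ 1) (hκ : ∀ n, Measurable (κ n))
    (hind : iIndepFun (Sum.elim κ θ) P) (hκ01 : ∀ n ω, κ n ω = 0 ∨ κ n ω = 1)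
    (hκ0 : ∀ n, P {ω | κ n ω = 0} = ENNReal.ofReal α)
    (htail : ∀ n t, 0 ≤ t → P {ω | t < θ n ω} = ENNReal.ofReal (Real.exp (-t))) (n : ℕ) :
    P.real (bigTerm κ θ n) = (1 - α) * Real.exp (-1) := by
  have hindep : IndepFun (κ n) (θ n) P := hind.indepFun (i := .inl n) (j := .inr n) (by simp)
  rw [measureReal_def, bigTerm, hindep.measure_inter_preimage_eq_mul _ _
    (measurableSet_singleton 1) measurableSet_Ioi]
  change (P {ω | κ n ω = 1} * P {ω | 1 < θ n ω}).toReal = _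
  rw [measure_setOf_eq_one_of_eq_zero_or_eq_one (hκ n) (hκ01 n) hα0 (hκ0 n), htail n 1 zero_le_one,
    ← ENNReal.ofReal_mul (by linarith), ENNReal.toReal_ofReal (by positivity)]

lemma ae_summable_mul_mul {a : ℕ → ℝ} (ha : ∀ n, 0 ≤ a n) (hsum : Summable a)
    (hκ : ∀ n, Measurable (κ n)) (hθ : ∀ n, Measurable (θ n))
    (hκ01 : ∀ n ω, κ n ω = 0 ∨ κ n ω = 1)
    (htail : ∀ n t, 0 ≤ t → P {ω | t < θ n ω} = ENNReal.ofReal (Real.exp (-t))) :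
    ∀ᵐ ω ∂P, Summable fun n => a n * κ n ω * θ n ω := by
  have hθ_pos : ∀ᵐ ω ∂P, ∀ n, 0 < θ n ω :=
    ae_all_iff.2 fun n => ae_pos_of_measure_lt_eq_exp (hθ n) (htail n)
  refine ae_summable_of_tsum_lintegral_ne_top
    (fun n => (((hκ n).const_mul (a n)).mul (hθ n)).aemeasurable) ?_ ?_
  · filter_upwards [hθ_pos] with ω hω n
    rcases hκ01 n ω with h | h <;> simp [h, mul_nonneg (ha n) (hω n).le]
  refine ne_top_of_le_ne_top ENNReal.ofReal_ne_top (b := ENNReal.ofReal (∑' n, a n)) ?_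
  rw [ENNReal.ofReal_tsum_of_nonneg ha hsum]
  refine ENNReal.tsum_le_tsum fun n => ?_
  calc ∫⁻ ω, ENNReal.ofReal (a n * κ n ω * θ n ω) ∂P
      ≤ ∫⁻ ω, ENNReal.ofReal (a n) * ENNReal.ofReal (θ n ω) ∂P := by
        refine lintegral_mono fun ω => ?_
        rcases hκ01 n ω with h | h <;> simp [h, ENNReal.ofReal_mul (ha n)]
    _ = ENNReal.ofReal (a n) := by
        rw [lintegral_const_mul _ (hθ n).ennreal_ofReal,
          lintegral_ofReal_eq_one_of_measure_lt_eq_exp (hθ n) (htail n), mul_one]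

lemma exists_half_le_measure_lt_sum_mul_indicator_bigTerm {α : ℝ} (hα0 : 0 ≤ α) (hα1 : α < 1)
    (hκ : ∀ n, Measurable (κ n)) (hθ : ∀ n, Measurable (θ n))
    (hind : iIndepFun (Sum.elim κ θ) P) (hκ01 : ∀ n ω, κ n ω = 0 ∨ κ n ω = 1)
    (hκ0 : ∀ n, P {ω | κ n ω = 0} = ENNReal.ofReal α)
    (htail : ∀ n t, 0 ≤ t → P {ω | t < θ n ω} = ENNReal.ofReal (Real.exp (-t)))
    {a : ℕ → ℝ} (ha0 : ∀ n, 0 ≤ a n) (ha : Antitone a) (hsum : Summable a)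
    (hlarge : 50 * a 0 < (1 - α) * ∑' n, a (n + 1)) :
    ∃ N, ENNReal.ofReal (1 / 2) ≤ P {ω | (1 - α) * (∑' n, a (n + 1)) / 12
      < ∑ i ∈ Finset.range N, a (i + 1) * (bigTerm κ θ (i + 1)).indicator 1 ω} := by
  set T := ∑' n, a (n + 1)
  have hT : 0 < T := by nlinarith [ha0 0]
  obtain ⟨N, hN⟩ : ∃ N, T / 2 ≤ ∑ i ∈ Finset.range N, a (i + 1) :=
    (((summable_nat_add_iff 1).2 hsum).hasSum.tendsto_sum_nat.eventually_const_le
      (half_lt_self hT)).exists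
  have he : 1 / 3 < Real.exp (-1) := by
    rw [Real.exp_neg, one_div]
    exact inv_strictAnti₀ (Real.exp_pos 1) Real.exp_one_lt_three
  set W := ∑ i ∈ Finset.range N, a (i + 1)
  have hqW : (1 - α) * T / 6 < (1 - α) * Real.exp (-1) * W := by
    have := mul_lt_mul_of_pos_left he (by linarith : 0 < 1 - α)
    nlinarith
  have hbound := one_sub_le_measure_half_lt_sum_mul_indicator (μ := P) (s := Finset.range N)
    (E := fun i => bigTerm κ θ (i + 1)) (w := fun i => a (i + 1)) (M := a 0)
    (fun i _ => measurableSet_bigTerm hκ hθ _)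
    (fun i _ => measureReal_bigTerm hα0 hα1.le hκ hind hκ01 hκ0 htail _)
    (fun i _ j _ hij => indepFun_indicator_bigTerm hκ hθ hind (by simpa using hij) _ _)
    (fun i _ => ⟨ha0 _, ha (Nat.zero_le _)⟩) (by nlinarith)
  refine ⟨N, le_trans ?_ (hbound.trans (measure_mono fun ω hω => ?_))⟩
  · have hhalf : 4 * a 0 / ((1 - α) * Real.exp (-1) * W) ≤ 1 / 2 := by
      rw [div_le_iff₀ (by nlinarith)]
      nlinarith
    calc ENNReal.ofReal (1 / 2) = 1 - ENNReal.ofReal (1 / 2) := by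
          rw [← ENNReal.ofReal_one, ← ENNReal.ofReal_sub _ (by norm_num)]
          norm_num
      _ ≤ _ := tsub_le_tsub_left (ENNReal.ofReal_le_ofReal hhalf) 1
  · rw [Set.mem_ofPred_eq] at hω ⊢
    linarith

end Model

theorem stmt10 :
    ∃ β γ : ℝ, 1 ≤ β ∧ 0 < γ ∧
    ∀ (Ω : Type) (_mΩ : MeasurableSpace Ω) (P : Measure Ω),
      IsProbabilityMeasure P →
      ∀ (α : ℝ) (κ θ : ℕ → Ω → ℝ) (a : ℕ → ℝ),
        0 ≤ α → α < 1 →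
        (∀ n, Measurable (κ n)) →
        (∀ n, Measurable (θ n)) →
        iIndepFun (Sum.elim κ θ) P →
        (∀ n ω, κ n ω = 0 ∨ κ n ω = 1) →
        (∀ n, P {ω | κ n ω = 0} = ENNReal.ofReal α) →
        (∀ n t, 0 ≤ t → P {ω | t < θ n ω} = ENNReal.ofReal (Real.exp (-t))) →
        (∀ n, 0 ≤ a n) → Antitone a →
        Summable a → 0 < a 0 →
        ∀ p : ℝ, 2 ≤ p →
          ENNReal.ofReal ((1 / 2) * Real.exp (-β * p))
            ≤ P {ω | γ * (p * a 0 + (1 - α) * ∑' n, a (n + 1)) ≤ a 0 * θ 0 ω + ∑' n, a (n + 1) * κ (n + 1) ω * θ (n + 1) ω} := by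
  refine ⟨3, 1 / 12, by norm_num, by norm_num, ?_⟩
  intro Ω _ P _ α κ θ a hα0 hα1 hκ hθ hind hκ01 hκ0 htail ha0 ha hsum _ p hp
  have hθ_nonneg : ∀ᵐ ω ∂P, ∀ n, 0 ≤ θ n ω :=
    ae_all_iff.2 fun n => (ae_pos_of_measure_lt_eq_exp (hθ n) (htail n)).mono fun _ h => h.le
  have hσ := ae_summable_mul_mul (P := P) (fun n => ha0 (n + 1)) ((summable_nat_add_iff 1).2 hsum)
    (fun n => hκ (n + 1)) (fun n => hθ (n + 1)) (fun n => hκ01 (n + 1)) (fun n => htail (n + 1))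
  have hθ0 : P {ω | 3 * p < θ 0 ω} = ENNReal.ofReal (Real.exp (-(3 * p))) :=
    htail 0 _ (by positivity)
  calc ENNReal.ofReal (1 / 2 * Real.exp (-3 * p))
      = P {ω | 3 * p < θ 0 ω} * ENNReal.ofReal (1 / 2) := by
        rw [hθ0, ← ENNReal.ofReal_mul (Real.exp_pos _).le, neg_mul, mul_comm]
    _ ≤ _ := ?_
  rcases le_or_gt ((1 - α) * ∑' n, a (n + 1)) (50 * a 0) with hsmall | hlarge
  · refine (mul_le_of_le_one_right' (by simp)).trans (measure_mono_ae ?_)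
    filter_upwards [hσ, hθ_nonneg] with ω hσω hθω (hθ0ω : 3 * p < θ 0 ω)
    have htail_nonneg := sum_mul_indicator_bigTerm_le_tsum ha0 (hκ01 · ω) hθω hσω 0
    rw [Finset.sum_range_zero] at htail_nonneg
    show _ ≤ _
    nlinarith [mul_le_mul_of_nonneg_left hθ0ω.le (ha0 0)]
  · obtain ⟨N, hN⟩ := exists_half_le_measure_lt_sum_mul_indicator_bigTerm hα0 hα1 hκ hθ hind
      hκ01 hκ0 htail ha0 ha hsum hlarge
    refine (mul_le_mul_right hN _).trans ?_
    refine ((indepFun_zero_sum_indicator_bigTerm hκ hθ hind a N).measure_inter_preimage_eq_mul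
      (Set.Ioi _) (Set.Ioi _) measurableSet_Ioi measurableSet_Ioi).symm.trans_le
      (measure_mono_ae ?_)
    filter_upwards [hσ, hθ_nonneg] with ω hσω hθω ⟨hθ0ω, hXω⟩
    simp only [Set.mem_preimage, Set.mem_Ioi] at hθ0ω hXω
    have hX_le := sum_mul_indicator_bigTerm_le_tsum ha0 (hκ01 · ω) hθω hσω N
    show _ ≤ _
    nlinarith [mul_le_mul_of_nonneg_left hθ0ω.le (ha0 0)]
end

section
/- There exist universal constants β ∈ [1,∞) and γ ∈ (0,∞) with the following property. Assume ∑_{n≥1} a_n < ∞ and let T = ∑_{n≥1} a_n κ_n θ_n. For t > 0 define p_n(t) = ( t − (1−α) ∑_{k>n} a_k ) / a_n when a_n > 0 and p_n(t) = +∞ when a_n = 0. Then for every t > 0, ℙ( T ≥ γ·t ) ≤ (1−α) [ ∑_{n : p_n(t) < 2} α^{n−1} + ∑_{n : p_n(t) ≥ 2} α^{n−1} e^{−β p_n(t)} ]. -/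
/-!
Split the event `{γ t ≤ T}` according to the first index `n` with `κ n = 1`: this index is
geometric, `ℙ(first one at n) = α ^ n (1 - α)`, and almost surely some `κ k` equals `1`. If
`p_n(t) < 2`, bound the `n`-th piece by the first-one event itself. Otherwise use a Chernoff bound
with tilt `1 / (2 a_n)`: by independence the tilted expectation over the `n`-th piece factors into
`α ^ n`, `(1 - α) 𝔼 e^{θ/2} ≤ 2 (1 - α)` and, for `k > n` (where `a_k ≤ a_n`),
`𝔼 e^{a_k κ_k θ_k / (2 a_n)} ≤ α + (1 - α) / (1 - a_k / (2 a_n)) ≤ e^{(1 - α) a_k / a_n}`.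
With `γ = 3` and `β = 1` the surplus factor `e^{t / (2 a_n)} ≥ e ≥ 2` absorbs the `2`. The
infinite series `T` is reached from its partial sums by Fatou's lemma.
-/

open MeasureTheory ProbabilityTheory Filter Topology Set
open scoped ENNReal

lemma add_mul_inv_one_sub_le_exp {α c : ℝ} (hα : α ≤ 1) (hc0 : 0 ≤ c) (hc : c ≤ 1 / 2) :
    α + (1 - α) * (1 - c)⁻¹ ≤ Real.exp (2 * (1 - α) * c) := by
  have hinv : (1 - c)⁻¹ ≤ 1 + 2 * c := by
    rw [inv_le_iff_one_le_mul₀ (by linarith)]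
    nlinarith
  calc α + (1 - α) * (1 - c)⁻¹ ≤ α + (1 - α) * (1 + 2 * c) := by gcongr
    _ = 2 * (1 - α) * c + 1 := by ring
    _ ≤ Real.exp (2 * (1 - α) * c) := Real.add_one_le_exp _

variable {Ω : Type*}

def firstOnePattern (n k : ℕ) : Set ℝ := if k < n then {0} else if k = n then {1} else univ

def firstOneAt (κ : ℕ → Ω → ℝ) (n : ℕ) : Set Ω := {ω | (∀ k < n, κ k ω = 0) ∧ κ n ω = 1}

lemma measurableSet_firstOnePattern (n k : ℕ) : MeasurableSet (firstOnePattern n k) := by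
  unfold firstOnePattern
  split_ifs <;> simp

lemma mem_firstOnePattern_of_mem_firstOneAt {κ : ℕ → Ω → ℝ} {n : ℕ} {ω : Ω}
    (hω : ω ∈ firstOneAt κ n) (k : ℕ) : κ k ω ∈ firstOnePattern n k := by
  obtain ⟨hlt, hn⟩ := hω
  unfold firstOnePattern
  split_ifs with hkn hkn'
  · exact hlt k hkn
  · exact hkn' ▸ hn
  · trivial

lemma firstOneAt_eq_biInter (κ : ℕ → Ω → ℝ) (n : ℕ) :
    firstOneAt κ n = ⋂ k ∈ Finset.range (n + 1), κ k ⁻¹' firstOnePattern n k := by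
  ext ω
  simp only [mem_iInter, Finset.mem_range, mem_preimage]
  refine ⟨fun hω k _ ↦ mem_firstOnePattern_of_mem_firstOneAt hω k, fun hω ↦ ⟨fun k hk ↦ ?_, ?_⟩⟩
  · simpa [firstOnePattern, hk] using hω k (by omega)
  · simpa [firstOnePattern] using hω n (by omega)

lemma firstOneAt_inter_eq_empty {κ θ : ℕ → Ω → ℝ} {a : ℕ → ℝ} (ha0 : ∀ k, 0 ≤ a k)
    (ha : Antitone a) {n : ℕ} (han : a n = 0) {s : ℝ} (hs : 0 < s) :
    firstOneAt κ n ∩ {ω | s ≤ ∑' k, a k * κ k ω * θ k ω} = ∅ := by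
  refine eq_empty_of_forall_notMem fun ω ⟨⟨hlt, _⟩, hsT⟩ ↦ ?_
  have hzero : ∀ k, a k * κ k ω * θ k ω = 0 := by
    intro k
    rcases lt_or_ge k n with hk | hk
    · simp [hlt k hk]
    · simp [le_antisymm (han ▸ ha hk) (ha0 k)]
  simp only [mem_ofPred_eq, hzero, tsum_zero] at hsT
  linarith

-- For `m > n`, `∏ k ∈ range m, tiltWeight a n k (κ k, θ k)` is the indicator of `firstOneAt κ n`
-- times `exp (∑ k ∈ range m, a k κ k θ k / (2 a n))`.
noncomputable def tiltWeight (a : ℕ → ℝ) (n k : ℕ) (x : ℝ × ℝ) : ℝ≥0∞ :=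
  (firstOnePattern n k).indicator 1 x.1 * ENNReal.ofReal (Real.exp (a k / (2 * a n) * (x.1 * x.2)))

lemma measurable_tiltWeight (a : ℕ → ℝ) (n k : ℕ) : Measurable (tiltWeight a n k) :=
  ((measurable_one.indicator (measurableSet_firstOnePattern n k)).comp measurable_fst).mul
    (by fun_prop)

lemma tendsto_prod_tiltWeight_of_mem_firstOneAt {κ θ : ℕ → Ω → ℝ} {a : ℕ → ℝ} {n : ℕ} {ω : Ω}
    (hω : ω ∈ firstOneAt κ n) (hsum : Summable fun k ↦ a k * κ k ω * θ k ω) :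
    Tendsto (fun m ↦ ∏ k ∈ Finset.range m, tiltWeight a n k (κ k ω, θ k ω)) atTop
      (𝓝 (ENNReal.ofReal (Real.exp ((2 * a n)⁻¹ * ∑' k, a k * κ k ω * θ k ω)))) := by
  have hprod : ∀ m, ∏ k ∈ Finset.range m, tiltWeight a n k (κ k ω, θ k ω)
      = ENNReal.ofReal (Real.exp ((2 * a n)⁻¹ * ∑ k ∈ Finset.range m, a k * κ k ω * θ k ω)) := by
    intro m
    rw [Finset.mul_sum, Real.exp_sum, ENNReal.ofReal_prod_of_nonneg fun _ _ ↦ (Real.exp_pos _).le]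
    refine Finset.prod_congr rfl fun k _ ↦ ?_
    rw [tiltWeight, indicator_of_mem (mem_firstOnePattern_of_mem_firstOneAt hω k), Pi.one_apply,
      one_mul]
    ring_nf
  simp_rw [hprod]
  exact (ENNReal.continuous_ofReal.comp Real.continuous_exp).tendsto _ |>.comp
    (hsum.hasSum.tendsto_sum_nat.const_mul _)

-- The paper's `p_{n+1}(t)`: indices start at `0` here.
noncomputable def tailRatio (α t : ℝ) (a : ℕ → ℝ) (n : ℕ) : ℝ :=
  (t - (1 - α) * ∑' k, a (n + 1 + k)) / a n

noncomputable def tailBoundTerm (α t : ℝ) (a : ℕ → ℝ) (n : ℕ) : ℝ :=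
  if 0 < a n then
    (if tailRatio α t a n < 2 then α ^ n else α ^ n * Real.exp (-1 * tailRatio α t a n))
  else 0

lemma tailBoundTerm_nonneg {α : ℝ} (hα : 0 ≤ α) (t : ℝ) (a : ℕ → ℝ) (n : ℕ) :
    0 ≤ tailBoundTerm α t a n := by
  unfold tailBoundTerm
  split_ifs <;> positivity

lemma tailBoundTerm_le_pow {α : ℝ} (hα : 0 ≤ α) (t : ℝ) {a : ℕ → ℝ} (n : ℕ) :
    tailBoundTerm α t a n ≤ α ^ n := by
  unfold tailBoundTerm
  split_ifs with _ hp
  · exact le_rfl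
  · exact mul_le_of_le_one_right (by positivity) (Real.exp_le_one_iff.2 (by linarith))
  · positivity

variable [MeasurableSpace Ω] {P : Measure Ω}

lemma iIndepFun_prodMk_of_sumElim {ι β : Type*} [MeasurableSpace β] {X Y : ι → Ω → β}
    (hX : ∀ i, Measurable (X i)) (hY : ∀ i, Measurable (Y i))
    (h : iIndepFun (Sum.elim X Y) P) : iIndepFun (fun i ω ↦ (X i ω, Y i ω)) P := by
  classical
  rw [iIndepFun_iff_iIndep]
  refine iIndepSets.iIndep (fun i ↦ ((hX i).prodMk (hY i)).comap_le)
    (fun i ↦ preimage (fun ω ↦ (X i ω, Y i ω)) ''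
      image2 (· ×ˢ ·) {s : Set β | MeasurableSet s} {t : Set β | MeasurableSet t})
    (fun i ↦ isPiSystem_prod.comap _)
    (fun i ↦ by rw [← MeasurableSpace.comap_generateFrom, generateFrom_prod]) ?_
  rw [iIndepSets_iff]
  intro S f hf
  simp only [mem_image, mem_image2, mem_ofPred_eq] at hf
  choose! t ht hft using hf
  choose! A hA B hB hAB using ht
  have hfi : ∀ i ∈ S, f i = X i ⁻¹' A i ∩ Y i ⁻¹' B i := fun i hi ↦ by
    rw [← hft i hi, ← hAB i hi]; rfl
  have hpair : ∀ i ∈ S, P (f i) = P (X i ⁻¹' A i) * P (Y i ⁻¹' B i) := fun i hi ↦ by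
    rw [hfi i hi]
    exact (h.indepFun Sum.inl_ne_inr).measure_inter_preimage_eq_mul _ _ (hA i hi) (hB i hi)
  have hall := h.meas_biInter (S := S.disjSum S)
    (s := Sum.elim (fun i ↦ X i ⁻¹' A i) (fun i ↦ Y i ⁻¹' B i)) (by
      rintro (i | i) hi
      · exact ⟨A i, hA i (Finset.inl_mem_disjSum.1 hi), rfl⟩
      · exact ⟨B i, hB i (Finset.inr_mem_disjSum.1 hi), rfl⟩)
  rw [Finset.prod_disjSum] at hall
  rw [Finset.prod_congr rfl hpair, Finset.prod_mul_distrib]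
  refine Eq.trans ?_ hall
  congr 1
  ext ω
  simp +contextual [hfi, Finset.mem_disjSum, forall_and]

lemma lintegral_exp_mul_le_of_exponential_tail [IsProbabilityMeasure P] {θ : Ω → ℝ}
    (hθ : Measurable θ) (htail : ∀ s, 0 ≤ s → P {ω | s < θ ω} = ENNReal.ofReal (Real.exp (-s)))
    {c : ℝ} (hc0 : 0 ≤ c) (hc1 : c < 1) :
    ∫⁻ ω, ENNReal.ofReal (Real.exp (c * θ ω)) ∂P ≤ ENNReal.ofReal (1 - c)⁻¹ := by
  rcases hc0.eq_or_lt with rfl | hc0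
  · simp
  have h1c : 0 < 1 - c := by linarith
  have hexp : -1 / c < -1 := by rw [div_lt_iff₀ hc0]; linarith
  rw [lintegral_eq_lintegral_meas_lt P (.of_forall fun ω ↦ (Real.exp_pos _).le)
      (Real.measurable_exp.comp (hθ.const_mul c)).aemeasurable,
    ← Ioc_union_Ioi_eq_Ioi zero_le_one,
    lintegral_union measurableSet_Ioi (Ioc_disjoint_Ioi le_rfl)]
  have h_small : ∫⁻ s in Ioc (0 : ℝ) 1, P {ω | s < Real.exp (c * θ ω)} ≤ 1 :=
    (setLIntegral_mono' measurableSet_Ioc fun _ _ ↦ prob_le_one).trans (by simp)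
  have h_tail : ∀ s ∈ Ioi (1 : ℝ),
      P {ω | s < Real.exp (c * θ ω)} = ENNReal.ofReal (s ^ (-1 / c)) := by
    intro s hs
    have hs0 : 0 < s := zero_lt_one.trans hs
    have hset : {ω | s < Real.exp (c * θ ω)} = {ω | Real.log s / c < θ ω} := by
      ext ω
      rw [mem_ofPred_eq, mem_ofPred_eq, div_lt_iff₀ hc0, mul_comm, ← Real.log_lt_iff_lt_exp hs0]
    rw [hset, htail _ (div_nonneg (Real.log_nonneg hs.le) hc0.le), Real.rpow_def_of_pos hs0]
    ring_nf
  have h_large : ∫⁻ s in Ioi (1 : ℝ), P {ω | s < Real.exp (c * θ ω)}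
      = ENNReal.ofReal (c / (1 - c)) := by
    rw [setLIntegral_congr_fun measurableSet_Ioi h_tail, ← ofReal_integral_eq_lintegral_ofReal
      (integrableOn_Ioi_rpow_of_lt hexp one_pos)
      ((ae_restrict_mem measurableSet_Ioi).mono fun s hs ↦ Real.rpow_nonneg
        (zero_le_one.trans (le_of_lt hs)) _),
      integral_Ioi_rpow_of_lt hexp one_pos, Real.one_rpow]
    congr 1
    have : -1 + c ≠ 0 := by linarith
    field_simp
    ring
  calc _ ≤ 1 + ENNReal.ofReal (c / (1 - c)) := by rw [h_large]; gcongr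
    _ = ENNReal.ofReal (1 - c)⁻¹ := by
      rw [← ENNReal.ofReal_one, ← ENNReal.ofReal_add zero_le_one (by positivity)]
      congr 1
      field_simp
      ring

lemma measure_eq_one_of_eq_zero_or_one [IsProbabilityMeasure P] {X : Ω → ℝ}
    (hX : Measurable X) (h01 : ∀ ω, X ω = 0 ∨ X ω = 1) {α : ℝ} (hα : 0 ≤ α)
    (h0 : P {ω | X ω = 0} = ENNReal.ofReal α) :
    P {ω | X ω = 1} = ENNReal.ofReal (1 - α) := by
  have hcompl : {ω | X ω = 1} = {ω | X ω = 0}ᶜ := by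
    ext ω
    rcases h01 ω with h | h <;> simp [h]
  have hm0 : MeasurableSet {ω | X ω = 0} := hX (measurableSet_singleton 0)
  rw [hcompl, measure_compl hm0 (measure_ne_top P _), h0,
    measure_univ, ENNReal.ofReal_sub _ hα, ENNReal.ofReal_one]

lemma lintegral_indicator_mul_exp_mul_eq {X θ : Ω → ℝ} (hX : Measurable X) (hθ : Measurable θ)
    (hXθ : IndepFun X θ P) (h01 : ∀ ω, X ω = 0 ∨ X ω = 1) (s : Set ℝ) (c : ℝ) :
    ∫⁻ ω, s.indicator 1 (X ω) * ENNReal.ofReal (Real.exp (c * (X ω * θ ω))) ∂P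
      = s.indicator 1 0 * P {ω | X ω = 0}
        + s.indicator 1 1 * (P {ω | X ω = 1} * ∫⁻ ω, ENNReal.ofReal (Real.exp (c * θ ω)) ∂P) := by
  have hexp : Measurable fun x ↦ ENNReal.ofReal (Real.exp (c * x)) := by fun_prop
  have hpt : ∀ ω, s.indicator 1 (X ω) * ENNReal.ofReal (Real.exp (c * (X ω * θ ω)))
      = s.indicator 1 0 * {ω | X ω = 0}.indicator 1 ω
        + s.indicator 1 1 *
          (({1} : Set ℝ).indicator 1 (X ω) * ENNReal.ofReal (Real.exp (c * θ ω))) := by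
    intro ω
    rcases h01 ω with h | h <;> simp [h]
  have hg : Measurable fun ω ↦ ({1} : Set ℝ).indicator (1 : ℝ → ℝ≥0∞) (X ω) :=
    (measurable_one.indicator (measurableSet_singleton 1)).comp hX
  have hh : Measurable fun ω ↦ ENNReal.ofReal (Real.exp (c * θ ω)) := hexp.comp hθ
  have hgh : Measurable fun ω ↦ ({1} : Set ℝ).indicator (1 : ℝ → ℝ≥0∞) (X ω)
      * ENNReal.ofReal (Real.exp (c * θ ω)) := hg.mul hh
  have hind : IndepFun (fun ω ↦ ({1} : Set ℝ).indicator (1 : ℝ → ℝ≥0∞) (X ω))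
      (fun ω ↦ ENNReal.ofReal (Real.exp (c * θ ω))) P :=
    hXθ.comp (measurable_one.indicator (measurableSet_singleton 1)) hexp
  have hm0 : MeasurableSet {ω | X ω = 0} := hX (measurableSet_singleton 0)
  rw [lintegral_congr hpt, lintegral_add_left ((measurable_one.indicator hm0).const_mul _),
    lintegral_const_mul _ (measurable_one.indicator hm0), lintegral_indicator_one hm0,
    lintegral_const_mul _ hgh, lintegral_mul_eq_lintegral_mul_lintegral_of_indepFun''
      hg.aemeasurable hh.aemeasurable hind]
  congr 3
  exact lintegral_indicator_one (hX (measurableSet_singleton 1))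

lemma mul_measure_le_of_le_liminf {Z : ℕ → Ω → ℝ≥0∞} (hZ : ∀ m, Measurable (Z m)) {C D : ℝ≥0∞}
    (hC : ∀ᶠ m in atTop, ∫⁻ ω, Z m ω ∂P ≤ C) {S : Set Ω}
    (hS : ∀ ω ∈ S, D ≤ liminf (fun m ↦ Z m ω) atTop) :
    D * P S ≤ C :=
  calc D * P S ≤ D * P {ω | D ≤ liminf (fun m ↦ Z m ω) atTop} := by gcongr; exact hS
    _ ≤ ∫⁻ ω, liminf (fun m ↦ Z m ω) atTop ∂P := mul_meas_ge_le_lintegral (.liminf hZ) D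
    _ ≤ liminf (fun m ↦ ∫⁻ ω, Z m ω ∂P) atTop := lintegral_liminf_le hZ
    _ ≤ C := liminf_le_of_frequently_le' hC.frequently

structure IsBernoulliExpFamily (P : Measure Ω) (α : ℝ) (κ θ : ℕ → Ω → ℝ) : Prop where
  measurable_kappa : ∀ n, Measurable (κ n)
  measurable_theta : ∀ n, Measurable (θ n)
  iIndepFun_sumElim : iIndepFun (Sum.elim κ θ) P
  eq_zero_or_one : ∀ n ω, κ n ω = 0 ∨ κ n ω = 1
  measure_eq_zero : ∀ n, P {ω | κ n ω = 0} = ENNReal.ofReal α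
  measure_lt : ∀ n s, 0 ≤ s → P {ω | s < θ n ω} = ENNReal.ofReal (Real.exp (-s))

namespace IsBernoulliExpFamily

variable {α : ℝ} {κ θ : ℕ → Ω → ℝ} {a : ℕ → ℝ} {n k : ℕ}

lemma isProbabilityMeasure (h : IsBernoulliExpFamily P α κ θ) : IsProbabilityMeasure P :=
  h.iIndepFun_sumElim.isProbabilityMeasure

lemma iIndepFun_kappa (h : IsBernoulliExpFamily P α κ θ) : iIndepFun κ P :=
  h.iIndepFun_sumElim.precomp (g := Sum.inl) Sum.inl_injective

lemma iIndepFun_prodMk (h : IsBernoulliExpFamily P α κ θ) :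
    iIndepFun (fun n ω ↦ (κ n ω, θ n ω)) P :=
  iIndepFun_prodMk_of_sumElim h.measurable_kappa h.measurable_theta h.iIndepFun_sumElim

lemma measure_eq_one (h : IsBernoulliExpFamily P α κ θ) (hα : 0 ≤ α) (n : ℕ) :
    P {ω | κ n ω = 1} = ENNReal.ofReal (1 - α) :=
  haveI := h.isProbabilityMeasure
  measure_eq_one_of_eq_zero_or_one (h.measurable_kappa n) (h.eq_zero_or_one n) hα
    (h.measure_eq_zero n)

lemma lintegral_indicator_mul_exp_mul_eq (h : IsBernoulliExpFamily P α κ θ) (hα : 0 ≤ α)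
    (n : ℕ) (s : Set ℝ) (c : ℝ) :
    ∫⁻ ω, s.indicator 1 (κ n ω) * ENNReal.ofReal (Real.exp (c * (κ n ω * θ n ω))) ∂P
      = s.indicator 1 0 * ENNReal.ofReal α + s.indicator 1 1 *
        (ENNReal.ofReal (1 - α) * ∫⁻ ω, ENNReal.ofReal (Real.exp (c * θ n ω)) ∂P) := by
  rw [_root_.lintegral_indicator_mul_exp_mul_eq (h.measurable_kappa n) (h.measurable_theta n)
    (h.iIndepFun_sumElim.indepFun Sum.inl_ne_inr) (h.eq_zero_or_one n), h.measure_eq_zero n,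
    h.measure_eq_one hα n]

lemma lintegral_exp_mul_le (h : IsBernoulliExpFamily P α κ θ) (n : ℕ) {c : ℝ} (hc0 : 0 ≤ c)
    (hc1 : c < 1) :
    ∫⁻ ω, ENNReal.ofReal (Real.exp (c * θ n ω)) ∂P ≤ ENNReal.ofReal (1 - c)⁻¹ :=
  haveI := h.isProbabilityMeasure
  lintegral_exp_mul_le_of_exponential_tail (h.measurable_theta n) (h.measure_lt n) hc0 hc1

lemma measure_firstOneAt (h : IsBernoulliExpFamily P α κ θ) (hα : 0 ≤ α) (n : ℕ) :
    P (firstOneAt κ n) = ENNReal.ofReal (α ^ n * (1 - α)) := by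
  have hlt : ∀ k ∈ Finset.range n, P (κ k ⁻¹' firstOnePattern n k) = ENNReal.ofReal α := by
    intro k hk
    rw [firstOnePattern, if_pos (Finset.mem_range.1 hk)]
    exact h.measure_eq_zero k
  have hn : P (κ n ⁻¹' firstOnePattern n n) = ENNReal.ofReal (1 - α) := by
    rw [firstOnePattern, if_neg (lt_irrefl n), if_pos rfl]
    exact h.measure_eq_one hα n
  rw [firstOneAt_eq_biInter, h.iIndepFun_kappa.meas_biInter
      fun k _ ↦ ⟨_, measurableSet_firstOnePattern n k, rfl⟩, Finset.prod_range_succ,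
    Finset.prod_congr rfl hlt, hn, Finset.prod_const, Finset.card_range,
    ← ENNReal.ofReal_pow hα, ← ENNReal.ofReal_mul (pow_nonneg hα n)]

lemma measure_forall_eq_zero (h : IsBernoulliExpFamily P α κ θ) (hα : α < 1) :
    P {ω | ∀ k, κ k ω = 0} = 0 := by
  have hle : ∀ m, P {ω | ∀ k, κ k ω = 0} ≤ ENNReal.ofReal α ^ m := fun m ↦
    calc P {ω | ∀ k, κ k ω = 0} ≤ P (⋂ k ∈ Finset.range m, {ω | κ k ω = 0}) :=
          measure_mono fun ω hω ↦ mem_iInter₂.2 fun k _ ↦ hω k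
      _ = ENNReal.ofReal α ^ m := by
          rw [h.iIndepFun_kappa.meas_biInter (s := fun k ↦ {ω | κ k ω = 0})
              fun k _ ↦ ⟨_, measurableSet_singleton 0, rfl⟩,
            Finset.prod_congr rfl fun k _ ↦ h.measure_eq_zero k, Finset.prod_const,
            Finset.card_range]
  exact le_antisymm (ge_of_tendsto' (ENNReal.tendsto_pow_atTop_nhds_zero_of_lt_one
    (ENNReal.ofReal_lt_one.2 hα)) hle) bot_le

lemma measure_le_tsum_firstOneAt_inter (h : IsBernoulliExpFamily P α κ θ) (hα : α < 1)
    (E : Set Ω) : P E ≤ ∑' n, P (firstOneAt κ n ∩ E) := by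
  classical
  have hcover : E ⊆ (⋃ n, firstOneAt κ n ∩ E) ∪ {ω | ∀ k, κ k ω = 0} := by
    intro ω hω
    by_cases hall : ∀ k, κ k ω = 0
    · exact Or.inr hall
    rw [not_forall] at hall
    exact Or.inl (mem_iUnion.2 ⟨Nat.find hall, ⟨fun k hk ↦ not_not.1 (Nat.find_min hall hk),
      (h.eq_zero_or_one _ ω).resolve_left (Nat.find_spec hall)⟩, hω⟩)
  calc P E ≤ P (⋃ n, firstOneAt κ n ∩ E) + P {ω | ∀ k, κ k ω = 0} :=
        (measure_mono hcover).trans (measure_union_le _ _)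
    _ = P (⋃ n, firstOneAt κ n ∩ E) := by rw [h.measure_forall_eq_zero hα, add_zero]
    _ ≤ ∑' n, P (firstOneAt κ n ∩ E) := measure_iUnion_le _

lemma lintegral_tiltWeight_of_lt (h : IsBernoulliExpFamily P α κ θ) (hα : 0 ≤ α) (hk : k < n) :
    ∫⁻ ω, tiltWeight a n k (κ k ω, θ k ω) ∂P = ENNReal.ofReal α := by
  simp only [tiltWeight]
  rw [h.lintegral_indicator_mul_exp_mul_eq hα k, firstOnePattern, if_pos hk]
  simp

lemma lintegral_tiltWeight_self_le (h : IsBernoulliExpFamily P α κ θ) (hα : 0 ≤ α)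
    (han : 0 < a n) :
    ∫⁻ ω, tiltWeight a n n (κ n ω, θ n ω) ∂P ≤ ENNReal.ofReal (2 * (1 - α)) := by
  have hc : a n / (2 * a n) = 1 / 2 := by field_simp
  simp only [tiltWeight]
  rw [h.lintegral_indicator_mul_exp_mul_eq hα n, firstOnePattern, if_neg (lt_irrefl n),
    if_pos rfl, hc]
  calc _ = ENNReal.ofReal (1 - α) * ∫⁻ ω, ENNReal.ofReal (Real.exp (1 / 2 * θ n ω)) ∂P := by simp
    _ ≤ ENNReal.ofReal (1 - α) * ENNReal.ofReal (1 - 1 / 2)⁻¹ :=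
        mul_le_mul_right (h.lintegral_exp_mul_le n (by norm_num) (by norm_num)) _
    _ = ENNReal.ofReal (2 * (1 - α)) := by
        rw [← ENNReal.ofReal_mul' (by norm_num), mul_comm]
        norm_num

lemma lintegral_tiltWeight_of_gt_le (h : IsBernoulliExpFamily P α κ θ) (hα0 : 0 ≤ α)
    (hα1 : α ≤ 1) (ha0 : ∀ k, 0 ≤ a k) (ha : Antitone a) (han : 0 < a n) (hk : n < k) :
    ∫⁻ ω, tiltWeight a n k (κ k ω, θ k ω) ∂P
      ≤ ENNReal.ofReal (Real.exp ((1 - α) * a k / a n)) := by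
  have hc0 : 0 ≤ a k / (2 * a n) := div_nonneg (ha0 k) (by positivity)
  have hc : a k / (2 * a n) ≤ 1 / 2 := by
    rw [div_le_iff₀ (by positivity)]
    linarith [ha hk.le]
  simp only [tiltWeight]
  rw [h.lintegral_indicator_mul_exp_mul_eq hα0 k, firstOnePattern,
    if_neg (by omega), if_neg (by omega)]
  calc _ ≤ ENNReal.ofReal α
        + ENNReal.ofReal (1 - α) * ENNReal.ofReal (1 - a k / (2 * a n))⁻¹ := by
        simp only [indicator_univ, Pi.one_apply, one_mul]
        gcongr
        exact h.lintegral_exp_mul_le k hc0 (by linarith)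
    _ = ENNReal.ofReal (α + (1 - α) * (1 - a k / (2 * a n))⁻¹) := by
        rw [← ENNReal.ofReal_mul (by linarith), ← ENNReal.ofReal_add hα0]
        have : 0 < 1 - a k / (2 * a n) := by linarith
        positivity
    _ ≤ ENNReal.ofReal (Real.exp ((1 - α) * a k / a n)) := by
        gcongr
        refine (add_mul_inv_one_sub_le_exp hα1 hc0 hc).trans_eq ?_
        congr 1
        field_simp

lemma lintegral_prod_tiltWeight_le (h : IsBernoulliExpFamily P α κ θ) (hα0 : 0 ≤ α)
    (hα1 : α ≤ 1) (ha0 : ∀ k, 0 ≤ a k) (ha : Antitone a) (hsum : Summable a) (han : 0 < a n)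
    (j : ℕ) :
    ∫⁻ ω, ∏ k ∈ Finset.range (n + 1 + j), tiltWeight a n k (κ k ω, θ k ω) ∂P
      ≤ ENNReal.ofReal
          (α ^ n * (2 * (1 - α)) * Real.exp ((1 - α) * (∑' k, a (n + 1 + k)) / a n)) := by
  have hindep : iIndepFun (fun k ω ↦ tiltWeight a n k (κ k ω, θ k ω)) P :=
    h.iIndepFun_prodMk.comp _ (measurable_tiltWeight a n)
  have hmeas : ∀ k, Measurable fun ω ↦ tiltWeight a n k (κ k ω, θ k ω) := fun k ↦
    (measurable_tiltWeight a n k).comp ((h.measurable_kappa k).prodMk (h.measurable_theta k))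
  have htail : ∏ i ∈ Finset.range j, ∫⁻ ω, tiltWeight a n (n + 1 + i) (κ _ ω, θ _ ω) ∂P
      ≤ ENNReal.ofReal (Real.exp ((1 - α) * (∑' k, a (n + 1 + k)) / a n)) :=
    calc _ ≤ ∏ i ∈ Finset.range j, ENNReal.ofReal (Real.exp ((1 - α) * a (n + 1 + i) / a n)) :=
          Finset.prod_le_prod' fun i _ ↦
            h.lintegral_tiltWeight_of_gt_le hα0 hα1 ha0 ha han (by omega)
      _ = ENNReal.ofReal (Real.exp (∑ i ∈ Finset.range j, (1 - α) * a (n + 1 + i) / a n)) := by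
          rw [Real.exp_sum, ENNReal.ofReal_prod_of_nonneg fun _ _ ↦ (Real.exp_pos _).le]
      _ ≤ _ := by
          rw [← Finset.sum_div, ← Finset.mul_sum]
          gcongr
          exact (hsum.comp_injective (add_right_injective (n + 1))).sum_le_tsum _ fun k _ ↦ ha0 _
  rw [lintegral_prod_eq_prod_lintegral_of_indepFun _ _ hindep hmeas, Finset.prod_range_add,
    Finset.prod_range_succ, Finset.prod_congr rfl fun k hk ↦
      h.lintegral_tiltWeight_of_lt hα0 (Finset.mem_range.1 hk), Finset.prod_const,
    Finset.card_range, ENNReal.ofReal_mul (by positivity), ENNReal.ofReal_mul (by positivity),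
    ENNReal.ofReal_pow hα0]
  gcongr
  exact h.lintegral_tiltWeight_self_le hα0 han

lemma ofReal_exp_mul_measure_firstOneAt_inter_le (h : IsBernoulliExpFamily P α κ θ)
    (hα0 : 0 ≤ α) (hα1 : α ≤ 1) (ha0 : ∀ k, 0 ≤ a k) (ha : Antitone a) (hsum : Summable a)
    (han : 0 < a n) {s : ℝ} (hs : 0 < s) :
    ENNReal.ofReal (Real.exp ((2 * a n)⁻¹ * s))
        * P (firstOneAt κ n ∩ {ω | s ≤ ∑' k, a k * κ k ω * θ k ω})
      ≤ ENNReal.ofReal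
          (α ^ n * (2 * (1 - α)) * Real.exp ((1 - α) * (∑' k, a (n + 1 + k)) / a n)) := by
  refine mul_measure_le_of_le_liminf
    (Z := fun m ω ↦ ∏ k ∈ Finset.range m, tiltWeight a n k (κ k ω, θ k ω))
    (fun m ↦ Finset.measurable_prod _ fun k _ ↦ (measurable_tiltWeight a n k).comp
      ((h.measurable_kappa k).prodMk (h.measurable_theta k)))
    (eventually_atTop.2 ⟨n + 1, fun m hm ↦ ?_⟩) fun ω ⟨hω, hsω⟩ ↦ ?_
  · obtain ⟨j, rfl⟩ := Nat.exists_eq_add_of_le hm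
    exact h.lintegral_prod_tiltWeight_le hα0 hα1 ha0 ha hsum han j
  · have hsumω : Summable fun k ↦ a k * κ k ω * θ k ω := by
      by_contra hns
      rw [mem_ofPred_eq, tsum_eq_zero_of_not_summable hns] at hsω
      linarith
    rw [(tendsto_prod_tiltWeight_of_mem_firstOneAt hω hsumω).liminf_eq]
    gcongr
    exact hsω

lemma measure_firstOneAt_inter_le_of_two_le (h : IsBernoulliExpFamily P α κ θ) (hα0 : 0 ≤ α)
    (hα1 : α ≤ 1) (ha0 : ∀ k, 0 ≤ a k) (ha : Antitone a) (hsum : Summable a) (han : 0 < a n)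
    {t : ℝ} (hp : 2 ≤ tailRatio α t a n) :
    P (firstOneAt κ n ∩ {ω | 3 * t ≤ ∑' k, a k * κ k ω * θ k ω})
      ≤ ENNReal.ofReal ((1 - α) * (α ^ n * Real.exp (-1 * tailRatio α t a n))) := by
  set R := ∑' k, a (n + 1 + k)
  have hR : 0 ≤ (1 - α) * R := mul_nonneg (by linarith) (tsum_nonneg fun _ ↦ ha0 _)
  have ht2 : 2 * a n ≤ t := by
    have := (le_div_iff₀ han).1 hp
    linarith
  have htwo : 2 ≤ Real.exp (t / (2 * a n)) :=
    calc (2 : ℝ) ≤ Real.exp 1 := by linarith [Real.add_one_le_exp 1]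
      _ ≤ Real.exp (t / (2 * a n)) :=
          Real.exp_le_exp.2 ((le_div_iff₀ (by positivity)).2 (by linarith))
  have hsplit : (2 * a n)⁻¹ * (3 * t) + -1 * tailRatio α t a n
      = t / (2 * a n) + (1 - α) * R / a n := by
    rw [tailRatio]
    field_simp
    ring
  have key : α ^ n * (2 * (1 - α)) * Real.exp ((1 - α) * R / a n)
      ≤ Real.exp ((2 * a n)⁻¹ * (3 * t))
        * ((1 - α) * (α ^ n * Real.exp (-1 * tailRatio α t a n))) :=
    calc _ ≤ α ^ n * (Real.exp (t / (2 * a n)) * (1 - α)) * Real.exp ((1 - α) * R / a n) := by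
          gcongr
      _ = (1 - α) * α ^ n * Real.exp (t / (2 * a n) + (1 - α) * R / a n) := by
          rw [Real.exp_add]; ring
      _ = _ := by rw [← hsplit, Real.exp_add]; ring
  rw [← ENNReal.mul_le_mul_iff_right (ENNReal.ofReal_pos.2 (Real.exp_pos _)).ne'
      ENNReal.ofReal_ne_top, ← ENNReal.ofReal_mul (Real.exp_pos _).le]
  exact (h.ofReal_exp_mul_measure_firstOneAt_inter_le hα0 hα1 ha0 ha hsum han
    (by linarith)).trans (ENNReal.ofReal_le_ofReal key)

lemma measure_firstOneAt_inter_le (h : IsBernoulliExpFamily P α κ θ) (hα0 : 0 ≤ α)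
    (hα1 : α ≤ 1) (ha0 : ∀ k, 0 ≤ a k) (ha : Antitone a) (hsum : Summable a) {t : ℝ} (ht : 0 < t)
    (n : ℕ) :
    P (firstOneAt κ n ∩ {ω | 3 * t ≤ ∑' k, a k * κ k ω * θ k ω})
      ≤ ENNReal.ofReal ((1 - α) * tailBoundTerm α t a n) := by
  rcases (ha0 n).lt_or_eq with han | han
  · rw [tailBoundTerm, if_pos han]
    split_ifs with hp
    · exact (measure_mono inter_subset_left).trans (by rw [h.measure_firstOneAt hα0, mul_comm])
    · exact h.measure_firstOneAt_inter_le_of_two_le hα0 hα1 ha0 ha hsum han (not_lt.1 hp)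
  · rw [firstOneAt_inter_eq_empty ha0 ha han.symm (by positivity), measure_empty]
    exact zero_le

lemma measure_le_ofReal_tsum_tailBoundTerm (h : IsBernoulliExpFamily P α κ θ) (hα0 : 0 ≤ α)
    (hα1 : α < 1) (ha0 : ∀ k, 0 ≤ a k) (ha : Antitone a) (hsum : Summable a) {t : ℝ}
    (ht : 0 < t) :
    P {ω | 3 * t ≤ ∑' k, a k * κ k ω * θ k ω}
      ≤ ENNReal.ofReal ((1 - α) * ∑' n, tailBoundTerm α t a n) := by
  have hnonneg : ∀ n, 0 ≤ (1 - α) * tailBoundTerm α t a n := fun n ↦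
    mul_nonneg (by linarith) (tailBoundTerm_nonneg hα0 t a n)
  have hsummable : Summable fun n ↦ tailBoundTerm α t a n :=
    .of_nonneg_of_le (tailBoundTerm_nonneg hα0 t a) (tailBoundTerm_le_pow hα0 t)
      (summable_geometric_of_lt_one hα0 hα1)
  calc _ ≤ ∑' n, P (firstOneAt κ n ∩ {ω | 3 * t ≤ ∑' k, a k * κ k ω * θ k ω}) :=
        h.measure_le_tsum_firstOneAt_inter hα1 _
    _ ≤ ∑' n, ENNReal.ofReal ((1 - α) * tailBoundTerm α t a n) :=
        ENNReal.tsum_le_tsum fun n ↦ h.measure_firstOneAt_inter_le hα0 hα1.le ha0 ha hsum ht n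
    _ = ENNReal.ofReal ((1 - α) * ∑' n, tailBoundTerm α t a n) := by
        rw [← ENNReal.ofReal_tsum_of_nonneg hnonneg (hsummable.mul_left _), tsum_mul_left]

end IsBernoulliExpFamily

theorem stmt11 :
    ∃ β γ : ℝ, 1 ≤ β ∧ 0 < γ ∧
    ∀ (Ω : Type) (_mΩ : MeasurableSpace Ω) (P : Measure Ω),
      IsProbabilityMeasure P →
      ∀ (α : ℝ) (κ θ : ℕ → Ω → ℝ) (a : ℕ → ℝ),
        0 ≤ α → α < 1 →
        (∀ n, Measurable (κ n)) →
        (∀ n, Measurable (θ n)) →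
        iIndepFun (Sum.elim κ θ) P →
        (∀ n ω, κ n ω = 0 ∨ κ n ω = 1) →
        (∀ n, P {ω | κ n ω = 0} = ENNReal.ofReal α) →
        (∀ n t, 0 ≤ t → P {ω | t < θ n ω} = ENNReal.ofReal (Real.exp (-t))) →
        (∀ n, 0 ≤ a n) → Antitone a →
        Summable a →
        ∀ t : ℝ, 0 < t →
          P {ω | γ * t ≤ ∑' n, a n * κ n ω * θ n ω}
            ≤ ENNReal.ofReal ((1 - α) *
              ∑' n, if 0 < a n then
                  (if (t - (1 - α) * ∑' k, a (n + 1 + k)) / a n < 2 then (α ^ n : ℝ)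
                   else α ^ n * Real.exp (-β * ((t - (1 - α) * ∑' k, a (n + 1 + k)) / a n)))
                else 0) :=
  ⟨1, 3, le_rfl, three_pos, fun _ _ _ _ _ _ _ _ hα0 hα1 hκ hθ hindep h01 hκ0 hθ0 ha0 ha hsum _ ht ↦
    IsBernoulliExpFamily.measure_le_ofReal_tsum_tailBoundTerm ⟨hκ, hθ, hindep, h01, hκ0, hθ0⟩
      hα0 hα1 ha0 ha hsum ht⟩
end
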